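/- arXiv:2508.01935 — 11 statements merged into one kernel-verified Lean document; each statement's English description precedes it below -/
import Mathlib

section
/- For any connected graph G, the edge open packing number satisfies ρ_e^o(G) ≥ ⌈diam(G)/2⌉, where diam(G) is the diameter of G. -/
private lemma eop_aux1 {V : Type*} {G : SimpleGraph V} (hG : G.Connected) {u v : V}
    (p : G.Walk u v) (i k : ℕ) : G.dist (p.getVert i) (p.getVert (i + k)) ≤ k := by
  induction k with
  | zero => simp
  | succ n ih =>
    by_cases h : i + n < p.length
    · have hadj := p.adj_getVert_succ h
      have h1 : G.dist (p.getVert (i + n)) (p.getVert (i + n + 1)) = 1 :=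
        (SimpleGraph.dist_eq_one_iff_adj).2 hadj
      have := hG.dist_triangle (u := p.getVert i) (v := p.getVert (i + n))
        (w := p.getVert (i + n + 1))
      have : G.dist (p.getVert i) (p.getVert (i + (n + 1))) ≤ n + 1 := by
        rw [show i + (n + 1) = i + n + 1 by omega]; omega
      exact this
    · have h1 : p.getVert (i + n) = v := p.getVert_of_length_le (by omega)
      have h2 : p.getVert (i + (n + 1)) = v := p.getVert_of_length_le (by omega)
      have h3 : G.dist (p.getVert i) (p.getVert (i + (n + 1)))
          = G.dist (p.getVert i) (p.getVert (i + n)) := by rw [h1, h2]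
      omega

private lemma eop_aux2 {V : Type*} {G : SimpleGraph V} (hG : G.Connected) {u v : V}
    (p : G.Walk u v) (hp : p.length = G.dist u v) {i j : ℕ} (hij : i ≤ j)
    (hj : j ≤ p.length) : G.dist (p.getVert i) (p.getVert j) = j - i := by
  have hub : G.dist (p.getVert i) (p.getVert j) ≤ j - i := by
    have := eop_aux1 hG p i (j - i)
    rwa [show i + (j - i) = j by omega] at this
  have h1 : G.dist u (p.getVert i) ≤ i := by
    have := eop_aux1 hG p 0 i
    rwa [Nat.zero_add, p.getVert_zero] at this
  have h2 : G.dist (p.getVert j) v ≤ p.length - j := by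
    have := eop_aux1 hG p j (p.length - j)
    rwa [show j + (p.length - j) = p.length by omega, p.getVert_length] at this
  have t1 := hG.dist_triangle (u := u) (v := p.getVert i) (w := p.getVert j)
  have t2 := hG.dist_triangle (u := u) (v := p.getVert j) (w := v)
  omega

private lemma eop_card_aux (d : ℕ) :
    ((Finset.range d).filter (fun a => a % 4 < 2)).card = 2 * (d / 4) + min (d % 4) 2 := by
  induction d with
  | zero => simp
  | succ n ih =>
    rw [Finset.range_add_one, Finset.filter_insert]
    by_cases h : n % 4 < 2
    · rw [if_pos h, Finset.card_insert_of_notMem (by simp)]; omega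
    · rw [if_neg h]; omega

/-- `e` is a common edge of `e₁` and `e₂` in `G`: `e` is an edge of `G` distinct from
`e₁, e₂` joining an endpoint of `e₁` to an endpoint of `e₂`. -/
def SimpleGraph.IsCommonEdge {V : Type*} (G : SimpleGraph V) (e e₁ e₂ : Sym2 V) : Prop :=
  e ∈ G.edgeSet ∧ e ≠ e₁ ∧ e ≠ e₂ ∧ ∃ a b, e = s(a, b) ∧ a ∈ e₁ ∧ b ∈ e₂

/-- `D` is an edge open packing set of `G`. -/
def SimpleGraph.IsEOPSet {V : Type*} (G : SimpleGraph V) (D : Set (Sym2 V)) : Prop :=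
  D ⊆ G.edgeSet ∧ ∀ e₁ ∈ D, ∀ e₂ ∈ D, e₁ ≠ e₂ → ∀ e, ¬ G.IsCommonEdge e e₁ e₂

/-- The edge open packing number `ρ_e^o(G)`. -/
noncomputable def SimpleGraph.eopNum {V : Type*} (G : SimpleGraph V) : ℕ :=
  sSup {n | ∃ D : Set (Sym2 V), G.IsEOPSet D ∧ D.ncard = n}

/-- `M` is an induced matching of `G`. -/
def SimpleGraph.IsInducedMatching {V : Type*} (G : SimpleGraph V) (M : Set (Sym2 V)) : Prop :=
  M ⊆ G.edgeSet ∧ (∀ e₁ ∈ M, ∀ e₂ ∈ M, e₁ ≠ e₂ → ∀ v, ¬(v ∈ e₁ ∧ v ∈ e₂)) ∧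
    (∀ e₁ ∈ M, ∀ e₂ ∈ M, e₁ ≠ e₂ → ∀ a b, a ∈ e₁ → b ∈ e₂ → ¬ G.Adj a b)

/-- The induced matching number of `G`. -/
noncomputable def SimpleGraph.imNum {V : Type*} (G : SimpleGraph V) : ℕ :=
  sSup {n | ∃ M : Set (Sym2 V), G.IsInducedMatching M ∧ M.ncard = n}

theorem stmt1 {V : Type*} [Fintype V] (G : SimpleGraph V) (hG : G.Connected) :
    (G.diam + 1) / 2 ≤ G.eopNum := by
  classical
  have hne : Nonempty V := hG.nonempty
  by_cases hd0 : G.diam = 0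
  · simp [hd0]
  obtain ⟨u, v, huv⟩ := G.exists_dist_eq_diam
  obtain ⟨p, hp⟩ := hG.exists_walk_length_eq_dist u v
  set d := G.diam with hd
  have hpl : p.length = d := by rw [hp, huv]
  have hplen : p.length = G.dist u v := hp
  -- key distance fact
  have key : ∀ i j : ℕ, i ≤ j → j ≤ d → G.dist (p.getVert i) (p.getVert j) = j - i := by
    intro i j hij hj
    exact eop_aux2 hG p hplen hij (by omega)
  have inj : ∀ i j : ℕ, i ≤ d → j ≤ d → p.getVert i = p.getVert j → i = j := by
    intro i j hi hj heq
    rcases le_total i j with h | h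
    · have := key i j h hj
      rw [heq, SimpleGraph.dist_self] at this
      omega
    · have := key j i h hi
      rw [heq, SimpleGraph.dist_self] at this
      omega
  set S : Finset ℕ := (Finset.range d).filter (fun a => a % 4 < 2) with hS
  set f : ℕ → Sym2 V := fun a => s(p.getVert a, p.getVert (a + 1)) with hf
  have hmemS : ∀ a ∈ S, a < d ∧ a % 4 < 2 := by
    intro a ha
    rw [hS, Finset.mem_filter, Finset.mem_range] at ha
    exact ha
  have hedge : ∀ a, a < d → f a ∈ G.edgeSet := by
    intro a ha
    exact (SimpleGraph.mem_edgeSet G).2 (p.adj_getVert_succ (by omega))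
  -- core claim for a < b
  have claim : ∀ a ∈ S, ∀ b ∈ S, a < b → ∀ x y, x ∈ f a → y ∈ f b → G.Adj x y →
      s(x, y) = f a ∨ s(x, y) = f b := by
    intro a ha b hb hab x y hx hy hadj
    obtain ⟨had, ham⟩ := hmemS a ha
    obtain ⟨hbd, hbm⟩ := hmemS b hb
    rw [hf] at hx hy
    simp only [Sym2.mem_iff] at hx hy
    have hcase : b = a + 1 ∨ a + 3 ≤ b := by omega
    have hdist : ∀ i j : ℕ, i ≤ j → j ≤ d → x = p.getVert i → y = p.getVert j →
        j - i = 1 := by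
      intro i j hij hj hxi hyj
      have := key i j hij hj
      rw [← hxi, ← hyj] at this
      have h1 : G.dist x y = 1 := (SimpleGraph.dist_eq_one_iff_adj).2 hadj
      omega
    rcases hcase with hcase | hcase
    · -- b = a + 1
      subst hcase
      rcases hx with hx | hx <;> rcases hy with hy | hy
      · left; rw [hx, hy, hf]
      · exfalso
        have := hdist a (a + 2) (by omega) (by omega) hx hy
        omega
      · exact absurd (hx.trans hy.symm) hadj.ne
      · right; rw [hx, hy, hf]
    · -- a + 3 ≤ b : contradiction
      exfalso
      rcases hx with hx | hx <;> rcases hy with hy | hy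
      · have := hdist a b (by omega) (by omega) hx hy; omega
      · have := hdist a (b + 1) (by omega) (by omega) hx hy; omega
      · have := hdist (a + 1) b (by omega) (by omega) hx hy; omega
      · have := hdist (a + 1) (b + 1) (by omega) (by omega) hx hy; omega
  set D : Set (Sym2 V) := ↑(S.image f) with hD
  have hmemD : ∀ e, e ∈ D ↔ ∃ a ∈ S, f a = e := by
    intro e
    rw [hD, Finset.mem_coe, Finset.mem_image]
  have hEOP : G.IsEOPSet D := by
    constructor
    · intro e he
      obtain ⟨a, ha, rfl⟩ := (hmemD e).1 he
      exact hedge a (hmemS a ha).1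
    · rintro e₁ he₁ e₂ he₂ hne e ⟨heE, hne1, hne2, x, y, hexy, hx, hy⟩
      obtain ⟨a, ha, rfl⟩ := (hmemD e₁).1 he₁
      obtain ⟨b, hb, rfl⟩ := (hmemD e₂).1 he₂
      have hadj : G.Adj x y := by
        rw [hexy, SimpleGraph.mem_edgeSet] at heE
        exact heE
      have hab : a ≠ b := fun h => hne (by rw [h])
      rcases lt_or_gt_of_ne hab with h | h
      · rcases claim a ha b hb h x y hx hy hadj with hc | hc
        · exact hne1 (hexy.trans hc)
        · exact hne2 (hexy.trans hc)
      · rcases claim b hb a ha h y x hy hx hadj.symm with hc | hc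
        · exact hne2 (by rw [hexy, Sym2.eq_swap, hc])
        · exact hne1 (by rw [hexy, Sym2.eq_swap, hc])
  have hinjOn : Set.InjOn f ↑S := by
    intro a ha b hb hfeq
    rw [Finset.mem_coe] at ha hb
    obtain ⟨had, _⟩ := hmemS a ha
    obtain ⟨hbd, _⟩ := hmemS b hb
    rw [hf, Sym2.eq_iff] at hfeq
    rcases hfeq with ⟨h1, h2⟩ | ⟨h1, h2⟩
    · exact inj a b (by omega) (by omega) h1
    · have e1 := inj a (b + 1) (by omega) (by omega) h1
      have e2 := inj (a + 1) b (by omega) (by omega) h2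
      omega
  have hcard : D.ncard = S.card := by
    rw [hD, Set.ncard_coe_finset, Finset.card_image_of_injOn hinjOn]
  have hScard : d ≤ 2 * S.card := by
    have := eop_card_aux d
    rw [← hS] at this
    omega
  have hbdd : BddAbove {n | ∃ D : Set (Sym2 V), G.IsEOPSet D ∧ D.ncard = n} := by
    refine ⟨Nat.card (Sym2 V), ?_⟩
    rintro n ⟨D', hD', rfl⟩
    calc D'.ncard ≤ (Set.univ : Set (Sym2 V)).ncard :=
          Set.ncard_le_ncard (Set.subset_univ _) Set.finite_univ
      _ = Nat.card (Sym2 V) := Set.ncard_univ _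
  have hmem : S.card ∈ {n | ∃ D : Set (Sym2 V), G.IsEOPSet D ∧ D.ncard = n} :=
    ⟨D, hEOP, hcard⟩
  calc (d + 1) / 2 ≤ S.card := by omega
    _ ≤ G.eopNum := le_csSup hbdd hmem
end

section
/- For a connected graph G, ρ_e^o(G) = 1 if and only if G is a complete graph. -/
/-!
Two distinct edges of a complete graph always have a common edge: join an endpoint of the first
that is not on the second to an endpoint of the second that is not on the first. Conversely, a
connected graph that is not complete contains an induced path `x - a - b`, and its two edges form
an edge open packing set of size two.
-/

lemma Sym2.exists_mem_notMem_of_ne {α : Type*} {e₁ e₂ : Sym2 α} (h : ¬ e₁.IsDiag)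
    (hne : e₁ ≠ e₂) : ∃ a ∈ e₁, a ∉ e₂ := by
  induction e₁ using Sym2.inductionOn with
  | hf x y =>
    by_contra! hsub
    exact hne ((Sym2.mem_and_mem_iff h).mp ⟨hsub x (Sym2.mem_mk_left x y),
      hsub y (Sym2.mem_mk_right x y)⟩).symm

namespace SimpleGraph

variable {V : Type*} {G : SimpleGraph V}

lemma Connected.exists_adj_adj_not_adj_of_ne_top (hG : G.Connected) (hne : G ≠ ⊤) :
    ∃ x a b, G.Adj x a ∧ G.Adj a b ∧ ¬ G.Adj x b ∧ x ≠ b := by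
  obtain ⟨u, v, huv, hnadj⟩ := ne_top_iff_exists_not_adj.mp hne
  obtain ⟨p, hp⟩ := (hG.preconnected u v).exists_walk_length_eq_dist
  exact p.exists_adj_adj_not_adj_ne hp (hG.one_lt_dist_of_ne_of_not_adj huv hnadj)

lemma IsCommonEdge.symm {e e₁ e₂ : Sym2 V} (h : G.IsCommonEdge e e₁ e₂) :
    G.IsCommonEdge e e₂ e₁ := by
  obtain ⟨he, he₁, he₂, a, b, rfl, ha, hb⟩ := h
  exact ⟨he, he₂, he₁, b, a, Sym2.eq_swap, hb, ha⟩

lemma top_exists_isCommonEdge {e₁ e₂ : Sym2 V} (h₁ : e₁ ∈ (⊤ : SimpleGraph V).edgeSet)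
    (h₂ : e₂ ∈ (⊤ : SimpleGraph V).edgeSet) (hne : e₁ ≠ e₂) :
    ∃ e, (⊤ : SimpleGraph V).IsCommonEdge e e₁ e₂ := by
  rw [edgeSet_top] at h₁ h₂
  obtain ⟨a, ha₁, ha₂⟩ := Sym2.exists_mem_notMem_of_ne h₁ hne
  obtain ⟨b, hb₂, hb₁⟩ := Sym2.exists_mem_notMem_of_ne h₂ hne.symm
  have hab : a ≠ b := by rintro rfl; exact ha₂ hb₂
  refine ⟨s(a, b), by simpa using hab, ?_, ?_, a, b, rfl, ha₁, hb₂⟩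
  · rintro h; exact hb₁ (h ▸ Sym2.mem_mk_right a b)
  · rintro h; exact ha₂ (h ▸ Sym2.mem_mk_left a b)

lemma IsEOPSet.ncard_le_one_of_top {D : Set (Sym2 V)} (hD : (⊤ : SimpleGraph V).IsEOPSet D) :
    D.ncard ≤ 1 := by
  have hsub : D.Subsingleton := by
    intro e₁ h₁ e₂ h₂
    by_contra hne
    obtain ⟨e, he⟩ := top_exists_isCommonEdge (hD.1 h₁) (hD.1 h₂) hne
    exact hD.2 e₁ h₁ e₂ h₂ hne e he
  exact (Set.ncard_le_one hsub.finite).mpr hsub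

lemma isEOPSet_singleton {e : Sym2 V} (he : e ∈ G.edgeSet) : G.IsEOPSet {e} :=
  ⟨Set.singleton_subset_iff.mpr he, by rintro _ rfl _ rfl hne; exact absurd rfl hne⟩

lemma isEOPSet_pair_of_induced_path {x a b : V} (hxa : G.Adj x a) (hab : G.Adj a b)
    (hxb : ¬ G.Adj x b) : G.IsEOPSet {s(x, a), s(a, b)} := by
  have no_common : ∀ e, ¬ G.IsCommonEdge e s(x, a) s(a, b) := by
    rintro _ ⟨hcd, hne₁, hne₂, c, d, rfl, hc, hd⟩
    rw [Sym2.mem_iff] at hc hd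
    rcases hc with rfl | rfl <;> rcases hd with rfl | rfl <;> simp_all
  refine ⟨by simp [Set.insert_subset_iff, hxa, hab], ?_⟩
  rintro e₁ (rfl | rfl) e₂ (rfl | rfl) hne e
  exacts [absurd rfl hne, no_common e, fun h => no_common e h.symm, absurd rfl hne]

lemma IsEOPSet.ncard_le_eopNum [Finite V] {D : Set (Sym2 V)} (hD : G.IsEOPSet D) :
    D.ncard ≤ G.eopNum :=
  le_csSup ⟨Nat.card (Sym2 V), by rintro _ ⟨D, -, rfl⟩; exact Set.ncard_le_card D⟩ ⟨D, hD, rfl⟩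

lemma eopNum_top (he : (⊤ : SimpleGraph V).edgeSet.Nonempty) :
    (⊤ : SimpleGraph V).eopNum = 1 := by
  obtain ⟨e, he⟩ := he
  refine IsGreatest.csSup_eq ⟨⟨{e}, isEOPSet_singleton he, Set.ncard_singleton e⟩, ?_⟩
  rintro _ ⟨D, hD, rfl⟩
  exact hD.ncard_le_one_of_top

end SimpleGraph

theorem stmt2 {V : Type*} [Fintype V] (G : SimpleGraph V) (hG : G.Connected)
    (he : G.edgeSet.Nonempty) : G.eopNum = 1 ↔ G = ⊤ := by
  refine ⟨fun h => ?_, by rintro rfl; exact SimpleGraph.eopNum_top he⟩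
  by_contra hne
  obtain ⟨x, a, b, hxa, hab, hxb, hxb_ne⟩ := hG.exists_adj_adj_not_adj_of_ne_top hne
  have hpair : s(x, a) ≠ s(a, b) := by
    rw [Ne, Sym2.eq_iff]
    rintro (⟨rfl, rfl⟩ | ⟨rfl, -⟩) <;> exact hxb_ne rfl
  have hle := (SimpleGraph.isEOPSet_pair_of_induced_path hxa hab hxb).ncard_le_eopNum
  rw [Set.ncard_pair hpair, h] at hle
  omega
end

section
/- For a connected graph G with m edges, ρ_e^o(G) = m if and only if G is a star K_{1,t} for some t ≥ 1. -/
/-- Key lemma: if the whole edge set is an EOP set, then for any edge `s(x,y)`,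
there cannot be both an edge `≠ s(x,y)` through `x` and an edge `≠ s(x,y)` through `y`. -/
lemma eop_keyL {V : Type*} {G : SimpleGraph V}
    (hE : G.IsEOPSet G.edgeSet) {x y : V} (hf : s(x, y) ∈ G.edgeSet)
    {h₁ h₂ : Sym2 V} (hh₁ : h₁ ∈ G.edgeSet) (hn₁ : h₁ ≠ s(x, y)) (hx : x ∈ h₁)
    (hh₂ : h₂ ∈ G.edgeSet) (hn₂ : h₂ ≠ s(x, y)) (hy : y ∈ h₂) : False := by
  have hxy : x ≠ y := (G.mem_edgeSet.mp hf).ne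
  by_cases h12 : h₁ = h₂
  · subst h12
    exact hn₁ ((Sym2.mem_and_mem_iff hxy).mp ⟨hx, hy⟩)
  · exact hE.2 h₁ hh₁ h₂ hh₂ h12 s(x, y)
      ⟨hf, Ne.symm hn₁, Ne.symm hn₂, x, y, rfl, hx, hy⟩

/-- Walk lemma: if `p` has the property that for every edge `h` through `p` and every
other endpoint `w` of `h`, all edges through `w` equal `h`, then (walking to `p`)
every edge contains `p`. -/
lemma eop_walkL {V : Type*} {G : SimpleGraph V} {u p : V} (W : G.Walk u p) :
    (∀ h ∈ G.edgeSet, p ∈ h → ∀ w ∈ h, w ≠ p → ∀ g ∈ G.edgeSet, w ∈ g → g = h) →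
    ∀ g ∈ G.edgeSet, u ∈ g → p ∈ g := by
  induction W with
  | nil => intro _ g _ hg; exact hg
  | @cons a b c h W' ih =>
    intro hii g hg hag
    by_cases hac : a = c
    · subst hac; exact hag
    · have hcm : c ∈ s(a, b) := ih hii s(a, b) (G.mem_edgeSet.mpr h) (by simp)
      rcases Sym2.mem_iff.mp hcm with h1 | h2
      · exact absurd h1.symm hac
      · subst h2
        have := hii s(a, c) (G.mem_edgeSet.mpr h) (by simp) a (by simp) hac g hg hag
        rw [this]; simp

lemma star_of_EOP {V : Type*} {G : SimpleGraph V} (hG : G.Connected)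
    (hE : G.IsEOPSet G.edgeSet) (hne : G.edgeSet.Nonempty) :
    ∃ c : V, ∀ e ∈ G.edgeSet, c ∈ e := by
  obtain ⟨f₀, hf₀⟩ := hne
  induction f₀ using Sym2.ind with
  | _ x y =>
  have hxy : x ≠ y := (G.mem_edgeSet.mp hf₀).ne
  -- find a center p satisfying the hypothesis of starM
  have key : ∃ p : V, ∀ h ∈ G.edgeSet, p ∈ h → ∀ w ∈ h, w ≠ p →
      ∀ g ∈ G.edgeSet, w ∈ g → g = h := by
    by_cases hx : ∃ h ∈ G.edgeSet, h ≠ s(x, y) ∧ x ∈ h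
    · obtain ⟨h₁, hh₁, hn₁, hx₁⟩ := hx
      refine ⟨x, ?_⟩
      intro h hh hph w hw hwp g hg hwg
      have hhw : h = s(x, w) := (Sym2.mem_and_mem_iff (Ne.symm hwp)).mp ⟨hph, hw⟩
      -- there is an edge through x distinct from h
      obtain ⟨h'', hh'', hn'', hx''⟩ : ∃ h'' ∈ G.edgeSet, h'' ≠ h ∧ x ∈ h'' := by
        by_cases hc : h = s(x, y)
        · exact ⟨h₁, hh₁, by rw [hc]; exact hn₁, hx₁⟩
        · exact ⟨s(x, y), hf₀, fun hq => hc hq.symm, by simp⟩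
      by_contra hgh
      exact eop_keyL hE (hhw ▸ hh) hh'' (hhw ▸ hn'') hx'' hg (hhw ▸ hgh) hwg
    · by_cases hy : ∃ h ∈ G.edgeSet, h ≠ s(x, y) ∧ y ∈ h
      · obtain ⟨h₁, hh₁, hn₁, hy₁⟩ := hy
        refine ⟨y, ?_⟩
        intro h hh hph w hw hwp g hg hwg
        have hhw : h = s(y, w) := (Sym2.mem_and_mem_iff (Ne.symm hwp)).mp ⟨hph, hw⟩
        obtain ⟨h'', hh'', hn'', hy''⟩ : ∃ h'' ∈ G.edgeSet, h'' ≠ h ∧ y ∈ h'' := by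
          by_cases hc : h = s(x, y)
          · exact ⟨h₁, hh₁, by rw [hc]; exact hn₁, hy₁⟩
          · exact ⟨s(x, y), hf₀, fun hq => hc hq.symm, by simp⟩
        by_contra hgh
        -- use edge s(y, w)
        exact eop_keyL hE (hhw ▸ hh) hh'' (hhw ▸ hn'') hy'' hg (hhw ▸ hgh) hwg
      · -- every edge through x or through y is s(x,y)
        push_neg at hx hy
        refine ⟨x, ?_⟩
        intro h hh hph w hw hwp g hg hwg
        have hhxy : h = s(x, y) := by
          by_contra hc
          exact (hx h hh hc) hph
        subst hhxy
        have hwy : w = y := by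
          rcases Sym2.mem_iff.mp hw with h1 | h2
          · exact absurd h1 hwp
          · exact h2
        subst hwy
        by_contra hc
        exact (hy g hg hc) hwg
  obtain ⟨p, hp⟩ := key
  refine ⟨p, ?_⟩
  intro e he
  induction e using Sym2.ind with
  | _ u v =>
  exact (hG.preconnected u p).elim fun W => eop_walkL W hp s(u, v) he (by simp)

theorem stmt3 {V : Type*} [Fintype V] (G : SimpleGraph V) (hG : G.Connected)
    (m : ℕ) (hm : G.edgeSet.ncard = m) (h1 : 1 ≤ m) :
    G.eopNum = m ↔ ∃ c : V, ∀ e ∈ G.edgeSet, c ∈ e := by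
  classical
  have hfin : G.edgeSet.Finite := Set.toFinite _
  set S := {n | ∃ D : Set (Sym2 V), G.IsEOPSet D ∧ D.ncard = n} with hS
  have hbdd : ∀ n ∈ S, n ≤ m := by
    rintro n ⟨D, hD, rfl⟩
    rw [← hm]
    exact Set.ncard_le_ncard hD.1 hfin
  have hbdd' : BddAbove S := ⟨m, hbdd⟩
  have heop : G.eopNum = sSup S := rfl
  constructor
  · intro heq
    have h0 : (0 : ℕ) ∈ S := by
      refine ⟨∅, ⟨Set.empty_subset _, ?_⟩, Set.ncard_empty _⟩
      intro e₁ he₁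
      exact absurd he₁ (Set.notMem_empty _)
    have hsup : sSup S ∈ S := Nat.sSup_mem ⟨0, h0⟩ hbdd'
    rw [← heop, heq] at hsup
    obtain ⟨D, hD, hcard⟩ := hsup
    have hDE : D = G.edgeSet :=
      Set.eq_of_subset_of_ncard_le hD.1 (by rw [hm, hcard]) hfin
    have hEop : G.IsEOPSet G.edgeSet := hDE ▸ hD
    have hne : G.edgeSet.Nonempty := Set.nonempty_of_ncard_ne_zero (by omega)
    exact star_of_EOP hG hEop hne
  · rintro ⟨c, hc⟩
    have hEop : G.IsEOPSet G.edgeSet := by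
      refine ⟨subset_rfl, ?_⟩
      rintro e₁ he₁ e₂ he₂ hne12 e ⟨heE, hne1, hne2, a, b, rfl, ha, hb⟩
      have hab : a ≠ b := (G.mem_edgeSet.mp heE).ne
      rcases Sym2.mem_iff.mp (hc s(a, b) heE) with h1 | h2
      · subst h1
        exact hne2 ((Sym2.mem_and_mem_iff hab).mp ⟨hc e₂ he₂, hb⟩).symm
      · subst h2
        exact hne1 ((Sym2.mem_and_mem_iff hab).mp ⟨ha, hc e₁ he₁⟩).symm
    have hmem : m ∈ S := ⟨G.edgeSet, hEop, hm⟩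
    rw [heop]
    exact le_antisymm (csSup_le ⟨m, hmem⟩ hbdd) (le_csSup hbdd' hmem)
end

section
/- If D is an edge open packing set of a graph G, then the subgraph of G induced by the endpoints of the edges of D, restricted to the edges of D, is a disjoint union of stars; equivalently, the edge-induced subgraph G⟨D⟩ contains no path on four vertices and no triangle. -/
theorem stmt4 {V : Type*} [Fintype V] (G : SimpleGraph V) (D : Set (Sym2 V))
    (hD : G.IsEOPSet D) :
    (∀ a b c d : V, a ≠ b → b ≠ c → c ≠ d → a ≠ c → b ≠ d → a ≠ d →
      s(a, b) ∈ D → s(b, c) ∈ D → s(c, d) ∈ D → False) ∧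
    (∀ a b c : V, a ≠ b → b ≠ c → a ≠ c →
      s(a, b) ∈ D → s(b, c) ∈ D → s(a, c) ∈ D → False) := by
  obtain ⟨hsub, hpack⟩ := hD
  constructor
  · intro a b c d hab hbc hcd hac hbd had h1 h2 h3
    refine hpack _ h1 _ h3 ?_ s(b, c)
      ⟨hsub h2, ?_, ?_, b, c, rfl, by simp, by simp⟩
    · simp only [ne_eq, Sym2.eq, Sym2.rel_iff', Prod.mk.injEq, Prod.swap_prod_mk]
      tauto
    · simp only [ne_eq, Sym2.eq, Sym2.rel_iff', Prod.mk.injEq, Prod.swap_prod_mk]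
      tauto
    · simp only [ne_eq, Sym2.eq, Sym2.rel_iff', Prod.mk.injEq, Prod.swap_prod_mk]
      tauto
  · intro a b c hab hbc hac h1 h2 h3
    refine hpack _ h1 _ h2 ?_ s(a, c)
      ⟨hsub h3, ?_, ?_, a, c, rfl, by simp, by simp⟩ <;>
    · simp only [ne_eq, Sym2.eq, Sym2.rel_iff', Prod.mk.injEq, Prod.swap_prod_mk]
      tauto
end

section
/- Let G be a connected graph with at least 3 edges that is not a star, and let D be an edge open packing set of G such that the subgraph G[D] induced by the endpoints of edges of D has k ≥ 2 connected components. Then E(G) \ D contains at least k edges. -/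
theorem stmt5 {V : Type*} [Fintype V] (G : SimpleGraph V) (hG : G.Connected)
    (hm : 3 ≤ G.edgeSet.ncard) (hnotstar : ¬ ∃ c : V, ∀ e ∈ G.edgeSet, c ∈ e)
    (D : Set (Sym2 V)) (hD : G.IsEOPSet D) (k : ℕ) (hk : 2 ≤ k)
    (hcomp : Nat.card (G.induce {v | ∃ e ∈ D, v ∈ e}).ConnectedComponent = k) :
    k ≤ (G.edgeSet \ D).ncard := by
  classical
  set S : Set V := {v | ∃ e ∈ D, v ∈ e} with hS
  set H : SimpleGraph S := G.induce S with hH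
  have key : ∀ c : H.ConnectedComponent, ∃ e ∈ G.edgeSet \ D,
      ∃ (a b : V) (ha : a ∈ S), e = s(a, b) ∧ H.connectedComponentMk ⟨a, ha⟩ = c ∧ b ∉ S := by
    intro c
    obtain ⟨u, hu⟩ := c.exists_rep
    have hnt : Nontrivial H.ConnectedComponent := by
      rw [← Finite.one_lt_card_iff_nontrivial, hcomp]; omega
    obtain ⟨c', hc'⟩ := exists_ne c
    obtain ⟨u', hu'⟩ := c'.exists_rep
    set A : Set V := {v | ∃ h : v ∈ S, H.connectedComponentMk ⟨v, h⟩ = c} with hA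
    have huA : (u : V) ∈ A := ⟨u.2, by rwa [Subtype.coe_eta]⟩
    have hu'A : (u' : V) ∉ A := by
      rintro ⟨h, hcc⟩
      rw [Subtype.coe_eta] at hcc
      exact hc' (hu'.symm.trans hcc)
    obtain ⟨p⟩ := hG.preconnected u.val u'.val
    obtain ⟨d, _, hdA, hdnA⟩ := p.exists_boundary_dart A huA hu'A
    obtain ⟨ha, hac⟩ := hdA
    have hbS : d.snd ∉ S := by
      intro hb
      apply hdnA
      refine ⟨hb, ?_⟩
      have hadj : H.Adj ⟨d.fst, ha⟩ ⟨d.snd, hb⟩ := d.adj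
      exact (SimpleGraph.ConnectedComponent.sound hadj.symm.reachable).trans hac
    refine ⟨s(d.fst, d.snd), ⟨G.mem_edgeSet.mpr d.adj, fun hmem => hbS ⟨_, hmem, ?_⟩⟩,
      d.fst, d.snd, ha, rfl, hac, hbS⟩
    exact Sym2.mem_mk_right _ _
  choose f hf a b ha heq hfc hb using key
  have hinj : Function.Injective f := by
    intro c₁ c₂ hcc
    have h12 := (heq c₁).symm.trans (hcc.trans (heq c₂))
    rw [Sym2.eq_iff] at h12
    rcases h12 with ⟨h1, h2⟩ | ⟨h1, h2⟩
    · rw [← hfc c₁, ← hfc c₂]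
      congr 1
      exact Subtype.ext h1
    · exact absurd (h1 ▸ ha c₁) (hb c₂)
  calc k = Nat.card H.ConnectedComponent := hcomp.symm
    _ = Nat.card (Set.range f) := (Nat.card_range_of_injective hinj).symm
    _ = (Set.range f).ncard := Nat.card_coe_set_eq _
    _ ≤ (G.edgeSet \ D).ncard := by
        refine Set.ncard_le_ncard ?_ (Set.toFinite _)
        rintro e ⟨c, rfl⟩
        exact hf c
end

section
/- Let G be a connected graph with ρ_e^o(G) ≤ t for some integer t ≥ 2, and let M be an induced matching of G with |M| = t. Then every vertex z of G not incident to any edge of M is adjacent to at least two endpoints of edges of M. -/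
/-- Any edge open packing set gives a lower bound for `eopNum`. -/
private lemma eop_lb {V : Type*} [Fintype V] (G : SimpleGraph V) (D : Set (Sym2 V))
    (h : G.IsEOPSet D) : D.ncard ≤ G.eopNum := by
  classical
  apply le_csSup
  · refine ⟨Nat.card (Sym2 V), ?_⟩
    rintro n ⟨E, _, rfl⟩
    calc E.ncard ≤ (Set.univ : Set (Sym2 V)).ncard :=
          Set.ncard_le_ncard (Set.subset_univ E) Set.finite_univ
      _ = Nat.card (Sym2 V) := Set.ncard_univ (Sym2 V)
  · exact ⟨D, h, rfl⟩

/-- To verify the EOP condition it suffices to check that adjacent endpoints only come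
from the edges themselves. -/
private lemma eop_of_key {V : Type*} (G : SimpleGraph V) (D : Set (Sym2 V))
    (hsub : D ⊆ G.edgeSet)
    (hkey : ∀ e₁ ∈ D, ∀ e₂ ∈ D, ∀ a b, a ∈ e₁ → b ∈ e₂ → G.Adj a b →
      s(a, b) = e₁ ∨ s(a, b) = e₂) :
    G.IsEOPSet D := by
  refine ⟨hsub, fun e₁ h1 e₂ h2 _ e he => ?_⟩
  obtain ⟨heE, hne1, hne2, a, b, rfl, ha, hb⟩ := he
  rcases hkey e₁ h1 e₂ h2 a b ha hb (G.mem_edgeSet.mp heE) with h | h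
  · exact hne1 h
  · exact hne2 h

theorem stmt8 {V : Type*} [Fintype V] (G : SimpleGraph V) (hG : G.Connected)
    (t : ℕ) (ht : 2 ≤ t) (hrho : G.eopNum ≤ t)
    (M : Set (Sym2 V)) (hM : G.IsInducedMatching M) (hcard : M.ncard = t)
    (z : V) (hz : ∀ e ∈ M, z ∉ e) :
    ∃ x y : V, x ≠ y ∧ (∃ e ∈ M, x ∈ e) ∧ (∃ e ∈ M, y ∈ e) ∧
      G.Adj z x ∧ G.Adj z y := by
  classical
  by_contra hcon
  push_neg at hcon
  obtain ⟨hMsub, hMdisj, hMind⟩ := hM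
  have hMfin : M.Finite := Set.toFinite M
  have hMne : M.Nonempty := Set.nonempty_of_ncard_ne_zero (by omega)
  by_cases hA : ∃ x, (∃ e ∈ M, x ∈ e) ∧ G.Adj z x
  · -- z is adjacent to exactly one endpoint x of M
    obtain ⟨x, hxP, hzx⟩ := hA
    have hxM : ∀ b, (∃ e ∈ M, b ∈ e) → G.Adj z b → b = x := by
      intro b hb hzb
      by_contra hne
      exact hcon b x hne hb hxP hzb hzx
    set D : Set (Sym2 V) := insert s(z, x) M with hD
    have hpair : ∀ g ∈ M, ∀ a, a ∈ (s(z, x) : Sym2 V) → ∀ b, b ∈ g → G.Adj a b →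
        s(a, b) = s(z, x) ∨ s(a, b) = g := by
      intro g hg a ha b hb hab
      rcases Sym2.mem_iff.mp ha with rfl | rfl
      · left
        have : b = x := hxM b ⟨g, hg, hb⟩ hab
        rw [this]
      · obtain ⟨f, hf, hxf⟩ := hxP
        by_cases hfg : f = g
        · subst hfg
          right
          exact ((Sym2.mem_and_mem_iff hab.ne).mp ⟨hxf, hb⟩).symm
        · exact absurd hab (hMind f hf g hg hfg a b hxf hb)
    have hkey : ∀ e₁ ∈ D, ∀ e₂ ∈ D, ∀ a b, a ∈ e₁ → b ∈ e₂ → G.Adj a b →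
        s(a, b) = e₁ ∨ s(a, b) = e₂ := by
      intro e₁ h1 e₂ h2 a b ha hb hab
      rcases Set.mem_insert_iff.mp h1 with rfl | h1 <;>
        rcases Set.mem_insert_iff.mp h2 with rfl | h2
      · rcases Sym2.mem_iff.mp ha with rfl | rfl <;>
          rcases Sym2.mem_iff.mp hb with rfl | rfl
        · exact absurd hab (G.irrefl)
        · exact Or.inl rfl
        · exact Or.inl Sym2.eq_swap
        · exact absurd hab (G.irrefl)
      · exact hpair e₂ h2 a ha b hb hab
      · rcases hpair e₁ h1 b hb a ha hab.symm with h | h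
        · right; rw [← h, Sym2.eq_swap]
        · left; rw [← h, Sym2.eq_swap]
      · by_cases hfg : e₁ = e₂
        · subst hfg
          exact Or.inl ((Sym2.mem_and_mem_iff hab.ne).mp ⟨ha, hb⟩).symm
        · exact absurd hab (hMind e₁ h1 e₂ h2 hfg a b ha hb)
    have hDeop : G.IsEOPSet D := by
      refine eop_of_key G D ?_ hkey
      refine Set.insert_subset (G.mem_edgeSet.mpr hzx) hMsub
    have hDcard : D.ncard = t + 1 := by
      rw [hD, Set.ncard_insert_of_notMem
        (fun hmem => hz _ hmem (Sym2.mem_iff.mpr (Or.inl rfl))) hMfin, hcard]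
    have := eop_lb G D hDeop
    omega
  · -- z is adjacent to no endpoint of M
    push_neg at hA
    obtain ⟨f₀, hf₀⟩ := hMne
    obtain ⟨⟨x₀, y₀⟩, hrep⟩ := Quot.exists_rep f₀
    have hx₀ : x₀ ∈ f₀ := by rw [← hrep]; exact Sym2.mem_iff.mpr (Or.inl rfl)
    have hzx₀ : z ≠ x₀ := by
      intro h
      exact hz f₀ hf₀ (h ▸ hx₀)
    obtain ⟨p⟩ := hG.preconnected z x₀
    obtain ⟨w, hzw, -⟩ : ∃ w, G.Adj z w ∧ True := by
      cases p with
      | nil => exact absurd rfl hzx₀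
      | cons h q => exact ⟨_, h, trivial⟩
    set φ : Sym2 V → Sym2 V :=
      fun f => if h : ∃ v, v ∈ f ∧ G.Adj w v then s(w, h.choose) else f with hφ
    have hφpos : ∀ (f : Sym2 V) (h : ∃ v, v ∈ f ∧ G.Adj w v),
        φ f = s(w, h.choose) ∧ h.choose ∈ f ∧ G.Adj w h.choose :=
      fun f h => ⟨dif_pos h, h.choose_spec.1, h.choose_spec.2⟩
    have hφneg : ∀ f, (¬ ∃ v, v ∈ f ∧ G.Adj w v) → φ f = f := fun f h => dif_neg h
    have hwP : ∀ g ∈ M, w ∉ g := fun g hg hw => hA w ⟨g, hg, hw⟩ hzw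
    -- pairs of images of M edges
    have hMM : ∀ f ∈ M, ∀ g ∈ M, ∀ a, a ∈ φ f → ∀ b, b ∈ φ g → G.Adj a b →
        s(a, b) = φ f ∨ s(a, b) = φ g := by
      intro f hf g hg a ha b hb hab
      by_cases hfe : ∃ v, v ∈ f ∧ G.Adj w v <;>
        by_cases hge : ∃ v, v ∈ g ∧ G.Adj w v
      · rw [(hφpos f hfe).1] at ha
        rw [(hφpos g hge).1] at hb
        rcases Sym2.mem_iff.mp ha with rfl | rfl <;>
          rcases Sym2.mem_iff.mp hb with rfl | rfl
        · exact absurd hab (G.irrefl)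
        · right; rw [(hφpos g hge).1]
        · left; rw [(hφpos f hfe).1, Sym2.eq_swap]
        · by_cases hfg : f = g
          · subst hfg
            exact absurd hab (by
              have : hfe.choose = hge.choose := rfl
              rw [this]; exact G.irrefl)
          · exact absurd hab
              (hMind f hf g hg hfg _ _ (hφpos f hfe).2.1 (hφpos g hge).2.1)
      · rw [(hφpos f hfe).1] at ha
        rw [hφneg g hge] at hb
        rcases Sym2.mem_iff.mp ha with rfl | rfl
        · exact absurd ⟨b, hb, hab⟩ hge
        · by_cases hfg : f = g
          · exact absurd (hfg ▸ hfe) hge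
          · exact absurd hab (hMind f hf g hg hfg _ _ (hφpos f hfe).2.1 hb)
      · rw [hφneg f hfe] at ha
        rw [(hφpos g hge).1] at hb
        rcases Sym2.mem_iff.mp hb with rfl | rfl
        · exact absurd ⟨a, ha, hab.symm⟩ hfe
        · by_cases hfg : f = g
          · exact absurd (hfg ▸ hge) hfe
          · exact absurd hab (hMind f hf g hg hfg _ _ ha (hφpos g hge).2.1)
      · rw [hφneg f hfe] at ha
        rw [hφneg g hge] at hb
        by_cases hfg : f = g
        · subst hfg
          left
          rw [hφneg f hfe]
          exact ((Sym2.mem_and_mem_iff hab.ne).mp ⟨ha, hb⟩).symm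
        · exact absurd hab (hMind f hf g hg hfg a b ha hb)
    -- pairs (s(z,w), φ g)
    have hZM : ∀ g ∈ M, ∀ a, a ∈ (s(z, w) : Sym2 V) → ∀ b, b ∈ φ g → G.Adj a b →
        s(a, b) = s(z, w) ∨ s(a, b) = φ g := by
      intro g hg a ha b hb hab
      by_cases hge : ∃ v, v ∈ g ∧ G.Adj w v
      · rw [(hφpos g hge).1] at hb
        rcases Sym2.mem_iff.mp ha with rfl | rfl <;>
          rcases Sym2.mem_iff.mp hb with rfl | rfl
        · exact Or.inl rfl
        · exact absurd hab (hA _ ⟨g, hg, (hφpos g hge).2.1⟩)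
        · exact absurd hab (G.irrefl)
        · right; rw [(hφpos g hge).1]
      · rw [hφneg g hge] at hb
        rcases Sym2.mem_iff.mp ha with rfl | rfl
        · exact absurd hab (hA b ⟨g, hg, hb⟩)
        · exact absurd ⟨b, hb, hab⟩ hge
    set D : Set (Sym2 V) := insert s(z, w) (φ '' M) with hD
    have hkey : ∀ e₁ ∈ D, ∀ e₂ ∈ D, ∀ a b, a ∈ e₁ → b ∈ e₂ → G.Adj a b →
        s(a, b) = e₁ ∨ s(a, b) = e₂ := by
      intro e₁ h1 e₂ h2 a b ha hb hab
      rcases Set.mem_insert_iff.mp h1 with rfl | ⟨f, hf, rfl⟩ <;>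
        rcases Set.mem_insert_iff.mp h2 with rfl | ⟨g, hg, rfl⟩
      · rcases Sym2.mem_iff.mp ha with rfl | rfl <;>
          rcases Sym2.mem_iff.mp hb with rfl | rfl
        · exact absurd hab (G.irrefl)
        · exact Or.inl rfl
        · exact Or.inl Sym2.eq_swap
        · exact absurd hab (G.irrefl)
      · exact hZM g hg a ha b hb hab
      · rcases hZM f hf b hb a ha hab.symm with h | h
        · right; rw [← h, Sym2.eq_swap]
        · left; rw [← h, Sym2.eq_swap]
      · exact hMM f hf g hg a ha b hb hab
    have hDeop : G.IsEOPSet D := by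
      refine eop_of_key G D ?_ hkey
      refine Set.insert_subset (G.mem_edgeSet.mpr hzw) ?_
      rintro e ⟨f, hf, rfl⟩
      by_cases hfe : ∃ v, v ∈ f ∧ G.Adj w v
      · rw [(hφpos f hfe).1]
        exact G.mem_edgeSet.mpr (hφpos f hfe).2.2
      · rw [hφneg f hfe]
        exact hMsub hf
    have hznotφ : ∀ f ∈ M, z ∉ φ f := by
      intro f hf hmem
      by_cases hfe : ∃ v, v ∈ f ∧ G.Adj w v
      · rw [(hφpos f hfe).1] at hmem
        rcases Sym2.mem_iff.mp hmem with rfl | h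
        · exact G.irrefl hzw
        · exact hz f hf (h ▸ (hφpos f hfe).2.1)
      · rw [hφneg f hfe] at hmem
        exact hz f hf hmem
    have hinj : Set.InjOn φ M := by
      intro f hf g hg heq
      by_cases hfe : ∃ v, v ∈ f ∧ G.Adj w v <;>
        by_cases hge : ∃ v, v ∈ g ∧ G.Adj w v
      · rw [(hφpos f hfe).1, (hφpos g hge).1] at heq
        rcases Sym2.eq_iff.mp heq with ⟨-, hv⟩ | ⟨hw, -⟩
        · by_contra hfg
          exact hMdisj f hf g hg hfg hfe.choose ⟨(hφpos f hfe).2.1, hv ▸ (hφpos g hge).2.1⟩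
        · exact absurd ((hw.symm ▸ (hφpos g hge).2.1) : w ∈ g) (hwP g hg)
      · rw [(hφpos f hfe).1, hφneg g hge] at heq
        exact absurd (heq ▸ Sym2.mem_iff.mpr (Or.inl rfl) : w ∈ g) (hwP g hg)
      · rw [hφneg f hfe, (hφpos g hge).1] at heq
        exact absurd (heq ▸ Sym2.mem_iff.mpr (Or.inl rfl) : w ∈ f) (hwP f hf)
      · rw [hφneg f hfe, hφneg g hge] at heq
        exact heq
    have hnot : s(z, w) ∉ φ '' M := by
      rintro ⟨f, hf, hfz⟩
      exact hznotφ f hf (hfz ▸ Sym2.mem_iff.mpr (Or.inl rfl))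
    have hDcard : D.ncard = t + 1 := by
      rw [hD, Set.ncard_insert_of_notMem hnot (hMfin.image φ),
        Set.ncard_image_of_injOn hinj, hcard]
    have := eop_lb G D hDeop
    omega
end

section
/- Let G be a connected graph with ρ_e^o(G) ≤ t, t ≥ 3, and let D be an edge open packing set of G of size t whose induced subgraph G[D] has components D_1, …, D_s with 2 ≤ s ≤ t−1, where each D_i is a star. If z is a vertex of G outside V(G[D]) adjacent to the center of some star component D_j, then z is adjacent to at least one further vertex of V(G[D]) other than that center. -/
theorem stmt9 {V : Type*} [Fintype V] (G : SimpleGraph V) (hG : G.Connected)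
    (t s : ℕ) (ht : 3 ≤ t) (hrho : G.eopNum ≤ t)
    (D : Set (Sym2 V)) (hD : G.IsEOPSet D) (hDcard : D.ncard = t)
    (hs2 : 2 ≤ s) (hst : s ≤ t - 1)
    (hcomp : Nat.card (G.induce {v | ∃ e ∈ D, v ∈ e}).ConnectedComponent = s)
    (hstars : ∀ C : (G.induce {v | ∃ e ∈ D, v ∈ e}).ConnectedComponent,
      ∃ u : {v | ∃ e ∈ D, v ∈ e},
        (G.induce {v | ∃ e ∈ D, v ∈ e}).connectedComponentMk u = C ∧
        ∀ e ∈ D, ∀ w : {v | ∃ e ∈ D, v ∈ e}, (w : V) ∈ e →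
          (G.induce {v | ∃ e ∈ D, v ∈ e}).connectedComponentMk w = C → (u : V) ∈ e)
    (z : V) (hz : z ∉ {v | ∃ e ∈ D, v ∈ e})
    (u : {v | ∃ e ∈ D, v ∈ e})
    (hcenter : ∀ e ∈ D, ∀ w : {v | ∃ e ∈ D, v ∈ e}, (w : V) ∈ e →
      (G.induce {v | ∃ e ∈ D, v ∈ e}).Reachable w u → (u : V) ∈ e)
    (hzu : G.Adj z (u : V)) :
    ∃ x ∈ {v : V | ∃ e ∈ D, v ∈ e}, x ≠ (u : V) ∧ G.Adj z x := by
  classical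
  by_contra hcon
  push_neg at hcon
  have hzuD : s(z, (u:V)) ∉ D := fun h => hz ⟨_, h, by simp⟩
  have key : ∀ f ∈ D, ∀ b, b ∈ f → G.Adj (u:V) b → (u:V) ∈ f := by
    intro f hf b hb hadj
    have hbS : b ∈ {v | ∃ e ∈ D, v ∈ e} := ⟨f, hf, hb⟩
    refine hcenter f hf ⟨b, hbS⟩ hb ?_
    exact SimpleGraph.Adj.reachable (by simpa using hadj.symm)
  have hEOP : G.IsEOPSet (insert s(z,(u:V)) D) := by
    constructor
    · intro e he
      rcases he with rfl | he
      · exact hzu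
      · exact hD.1 he
    · intro e₁ he₁ e₂ he₂ hne e hce
      obtain ⟨heG, hne1, hne2, a, b, rfl, ha, hb⟩ := hce
      have hadj : G.Adj a b := heG
      rcases he₁ with rfl | he₁ <;> rcases he₂ with rfl | he₂
      · exact hne rfl
      · rcases Sym2.mem_iff.mp ha with rfl | rfl
        · by_cases hbu : b = (u:V)
          · exact hne1 (by rw [hbu])
          · exact hcon b ⟨e₂, he₂, hb⟩ hbu hadj
        · have huf := key e₂ he₂ b hb hadj
          have hbu : ((u:V)) ≠ b := hadj.ne
          exact hne2 ((Sym2.mem_and_mem_iff hbu).mp ⟨huf, hb⟩).symm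
      · rcases Sym2.mem_iff.mp hb with rfl | rfl
        · by_cases hau : a = (u:V)
          · exact hne2 (by rw [hau, Sym2.eq_swap])
          · exact hcon a ⟨e₁, he₁, ha⟩ hau hadj.symm
        · have huf := key e₁ he₁ a ha hadj.symm
          have hau : ((u:V)) ≠ a := hadj.symm.ne
          have : e₁ = s((u:V), a) := ((Sym2.mem_and_mem_iff hau).mp ⟨huf, ha⟩)
          exact hne1 (by rw [this, Sym2.eq_swap])
      · exact hD.2 e₁ he₁ e₂ he₂ hne _ ⟨heG, hne1, hne2, a, b, rfl, ha, hb⟩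
  have hcard : (insert s(z,(u:V)) D).ncard = t + 1 := by
    rw [Set.ncard_insert_of_notMem hzuD (Set.toFinite D), hDcard]
  have hbdd : BddAbove {n | ∃ D' : Set (Sym2 V), G.IsEOPSet D' ∧ D'.ncard = n} := by
    refine ⟨Nat.card (Sym2 V), ?_⟩
    rintro n ⟨D', _, rfl⟩
    simpa [Set.ncard_univ] using Set.ncard_le_ncard (Set.subset_univ D') Set.finite_univ
  have hle : t + 1 ≤ G.eopNum := le_csSup hbdd ⟨_, hEOP, hcard⟩
  omega
end

section
/- Let G be a connected graph satisfying: (i) 2 ≤ diam(G) ≤ 2t; (ii) G has no induced K_{1,s} for s ≥ t+1; (iii) for every induced matching M of size t, every vertex outside V(G[M]) has at least two neighbors in V(G[M]); and (iv) for every edge open packing set D of size t whose induced subgraph has between 2 and t−1 star components, every vertex outside V(G[D]) adjacent to a center of a component is adjacent to another vertex of V(G[D]). Then 2 ≤ ρ_e^o(G) ≤ t. -/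
set_option linter.unusedSectionVars false
set_option linter.unusedVariables false

namespace EOPproof
variable {V : Type*} {G : SimpleGraph V} {D : Set (Sym2 V)}

lemma sym2_eq_of_mem {z : Sym2 V} {v w : V} (hv : v ∈ z) (hw : w ∈ z) (hne : v ≠ w) :
    z = s(v, w) := by
  induction z using Sym2.ind with
  | _ x y =>
    rw [Sym2.mem_iff] at hv hw
    rcases hv with rfl | rfl <;> rcases hw with rfl | rfl
    · exact absurd rfl hne
    · rfl
    · exact Sym2.eq_swap
    · exact absurd rfl hne

lemma sym2_exists (z : Sym2 V) : ∃ p q, z = s(p, q) :=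
  Sym2.ind (fun p q => ⟨p, q, rfl⟩) z

lemma noCommon (hD : G.IsEOPSet D) {e₁ e₂ e : Sym2 V} (h1 : e₁ ∈ D) (h2 : e₂ ∈ D)
    (hne : e₁ ≠ e₂) (heE : e ∈ G.edgeSet) (hne1 : e ≠ e₁) (hne2 : e ≠ e₂)
    {a b : V} (hab : e = s(a, b)) (ha : a ∈ e₁) (hb : b ∈ e₂) : False :=
  hD.2 e₁ h1 e₂ h2 hne e ⟨heE, hne1, hne2, a, b, hab, ha, hb⟩

lemma cross (hD : G.IsEOPSet D) {e f : Sym2 V} (he : e ∈ D) (hf : f ∈ D)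
    (hnshare : ∀ v, ¬ (v ∈ e ∧ v ∈ f)) {x y : V} (hx : x ∈ e) (hy : y ∈ f)
    (hadj : G.Adj x y) : False := by
  have hef : e ≠ f := fun h => hnshare x ⟨hx, h ▸ hx⟩
  refine noCommon hD he hf hef (G.mem_edgeSet.mpr hadj) (fun h => ?_) (fun h => ?_) rfl hx hy
  · exact hnshare y ⟨h ▸ Sym2.mem_mk_right x y, hy⟩
  · exact hnshare x ⟨hx, h ▸ Sym2.mem_mk_left x y⟩

lemma leaves (hD : G.IsEOPSet D) {c a b : V} (ha : s(c, a) ∈ D) (hb : s(c, b) ∈ D)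
    (hne : s(c, a) ≠ s(c, b)) (hadj : G.Adj a b) : False := by
  have hca : G.Adj c a := G.mem_edgeSet.mp (hD.1 ha)
  have hcb : G.Adj c b := G.mem_edgeSet.mp (hD.1 hb)
  refine noCommon hD ha hb hne (G.mem_edgeSet.mpr hadj) (fun h => ?_) (fun h => ?_) rfl
    (Sym2.mem_mk_right c a) (Sym2.mem_mk_right c b)
  · rcases Sym2.eq_iff.mp h with ⟨h1, _⟩ | ⟨_, h2⟩
    · exact hca.ne h1.symm
    · exact hcb.ne h2.symm
  · rcases Sym2.eq_iff.mp h with ⟨h1, _⟩ | ⟨h1, h2⟩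
    · exact hca.ne h1.symm
    · exact hadj.ne h1

def Rel (D : Set (Sym2 V)) (e f : Sym2 V) : Prop :=
  e ∈ D ∧ f ∈ D ∧ (e = f ∨ ∃ v, v ∈ e ∧ v ∈ f)

lemma rel_refl {e : Sym2 V} (he : e ∈ D) : Rel D e e := ⟨he, he, Or.inl rfl⟩

lemma Rel.symm {e f : Sym2 V} (h : Rel D e f) : Rel D f e :=
  ⟨h.2.1, h.1, h.2.2.imp Eq.symm (fun ⟨v, hv⟩ => ⟨v, hv.2, hv.1⟩)⟩

lemma rel_trans (hD : G.IsEOPSet D) {e f g : Sym2 V} (h1 : Rel D e f) (h2 : Rel D f g) :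
    Rel D e g := by
  obtain ⟨he, hf, h1⟩ := h1
  obtain ⟨-, hg, h2⟩ := h2
  refine ⟨he, hg, ?_⟩
  rcases h1 with rfl | ⟨v, hve, hvf⟩
  · exact h2
  rcases h2 with rfl | ⟨w, hwf, hwg⟩
  · exact Or.inr ⟨v, hve, hvf⟩
  by_cases heg : e = g
  · exact Or.inl heg
  by_cases hvw : v = w
  · exact Or.inr ⟨v, hve, hvw ▸ hwg⟩
  by_cases hfe : f = e
  · exact Or.inr ⟨w, hfe ▸ hwf, hwg⟩
  by_cases hfg : f = g
  · exact Or.inr ⟨v, hve, hfg ▸ hvf⟩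
  exact absurd (noCommon hD he hg heg (hD.1 hf) hfe hfg (sym2_eq_of_mem hvf hwf hvw) hve hwg)
    not_false


lemma starCenter (hD : G.IsEOPSet D) {c a b : V} (ha : s(c, a) ∈ D) (hb : s(c, b) ∈ D)
    (hne : s(c, a) ≠ s(c, b)) {h : Sym2 V} (hh : h ∈ D) (h1 : Rel D h s(c, a))
    (h2 : Rel D h s(c, b)) : c ∈ h := by
  rcases h1.2.2 with rfl | ⟨v, hvh, hva⟩
  · exact Sym2.mem_mk_left c a
  rcases Sym2.mem_iff.mp hva with rfl | rfl
  · exact hvh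
  rcases h2.2.2 with rfl | ⟨w, hwh, hwb⟩
  · exact Sym2.mem_mk_left c b
  rcases Sym2.mem_iff.mp hwb with rfl | rfl
  · exact hwh
  have hab : v ≠ w := fun hvw => hne (by rw [hvw])
  have := sym2_eq_of_mem hvh hwh hab
  exact absurd (leaves hD ha hb hne (G.mem_edgeSet.mp (this ▸ hD.1 hh))) not_false


section Reps
variable [Fintype V] [DecidableEq V]

noncomputable local instance sym2LO : LinearOrder (Sym2 V) :=
  LinearOrder.lift' (Fintype.equivFin (Sym2 V)) (Equiv.injective _)

noncomputable def clsF (D : Set (Sym2 V)) (e : Sym2 V) : Finset (Sym2 V) :=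
  @Finset.filter _ (Rel D e) (Classical.decPred _) (Set.toFinite D).toFinset

lemma mem_clsF {e f : Sym2 V} : f ∈ clsF D e ↔ f ∈ D ∧ Rel D e f := by
  simp only [clsF, Finset.mem_filter, Set.Finite.mem_toFinset]

noncomputable def rep (D : Set (Sym2 V)) (e : Sym2 V) : Sym2 V :=
  if h : (clsF D e).Nonempty then (clsF D e).min' h else e

lemma clsF_nonempty {e : Sym2 V} (he : e ∈ D) : (clsF D e).Nonempty :=
  ⟨e, mem_clsF.mpr ⟨he, rel_refl he⟩⟩

lemma rel_rep {e : Sym2 V} (he : e ∈ D) : Rel D e (rep D e) := by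
  rw [rep, dif_pos (clsF_nonempty he)]
  exact (mem_clsF.mp ((clsF D e).min'_mem _)).2

lemma rep_mem {e : Sym2 V} (he : e ∈ D) : rep D e ∈ D := (rel_rep he).2.1

lemma clsF_eq (hD : G.IsEOPSet D) {e f : Sym2 V} (h : Rel D e f) : clsF D e = clsF D f := by
  ext x
  simp only [mem_clsF]
  exact ⟨fun ⟨hx, hr⟩ => ⟨hx, rel_trans hD h.symm hr⟩, fun ⟨hx, hr⟩ => ⟨hx, rel_trans hD h hr⟩⟩

lemma rep_eq (hD : G.IsEOPSet D) {e f : Sym2 V} (h : Rel D e f) : rep D e = rep D f := by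
  have hP : (clsF D f).Nonempty := clsF_nonempty h.2.1
  unfold rep
  simp only [clsF_eq hD h]
  rw [dif_pos hP, dif_pos hP]

noncomputable def reps (D : Set (Sym2 V)) : Finset (Sym2 V) :=
  (Set.toFinite D).toFinset.image (rep D)

lemma mem_reps {e : Sym2 V} : e ∈ reps D ↔ ∃ f ∈ D, rep D f = e := by
  simp only [reps, Finset.mem_image, Set.Finite.mem_toFinset]

lemma mem_reps_self {e : Sym2 V} (he : e ∈ D) : rep D e ∈ reps D :=
  mem_reps.mpr ⟨e, he, rfl⟩

lemma reps_mem {e : Sym2 V} (he : e ∈ reps D) : e ∈ D := by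
  obtain ⟨f, hf, rfl⟩ := mem_reps.mp he
  exact rep_mem hf

lemma rep_fix (hD : G.IsEOPSet D) {e : Sym2 V} (he : e ∈ reps D) : rep D e = e := by
  obtain ⟨f, hf, rfl⟩ := mem_reps.mp he
  exact rep_eq hD (rel_rep hf).symm

lemma reps_not_rel (hD : G.IsEOPSet D) {e f : Sym2 V} (he : e ∈ reps D) (hf : f ∈ reps D)
    (hne : e ≠ f) : ¬ Rel D e f :=
  fun h => hne ((rep_fix hD he).symm.trans ((rep_eq hD h).trans (rep_fix hD hf)))

lemma class_card_le (hD : G.IsEOPSet D) {t : ℕ} (ht : 1 ≤ t)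
    (hC2 : ∀ s, t + 1 ≤ s → ¬ ∃ (c : V) (L : Finset V), L.card = s ∧ c ∉ L ∧
      (∀ l ∈ L, G.Adj c l) ∧ (∀ l₁ ∈ L, ∀ l₂ ∈ L, l₁ ≠ l₂ → ¬ G.Adj l₁ l₂))
    {e : Sym2 V} (he : e ∈ D) : (clsF D e).card ≤ t := by
  by_contra hbig
  push_neg at hbig
  have h2 : 1 < (clsF D e).card := by omega
  obtain ⟨f, hf, g, hg, hfg⟩ := Finset.one_lt_card.mp h2
  rw [mem_clsF] at hf hg
  have hrel : Rel D f g := rel_trans hD hf.2.symm hg.2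
  rcases hrel.2.2 with h | ⟨c, hcf, hcg⟩
  · exact hfg h
  have hspecf : s(c, Sym2.Mem.other' hcf) = f := Sym2.other_spec' hcf
  have hspecg : s(c, Sym2.Mem.other' hcg) = g := Sym2.other_spec' hcg
  have haD : s(c, Sym2.Mem.other' hcf) ∈ D := by rw [hspecf]; exact hf.1
  have hbD : s(c, Sym2.Mem.other' hcg) ∈ D := by rw [hspecg]; exact hg.1
  have habne : s(c, Sym2.Mem.other' hcf) ≠ s(c, Sym2.Mem.other' hcg) := by
    rw [hspecf, hspecg]; exact hfg
  have hcenter : ∀ h ∈ clsF D e, c ∈ h := by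
    intro h hh
    rw [mem_clsF] at hh
    have ha1 : Rel D e s(c, Sym2.Mem.other' hcf) := by rw [hspecf]; exact hf.2
    have ha2 : Rel D e s(c, Sym2.Mem.other' hcg) := by rw [hspecg]; exact hg.2
    exact starCenter hD haD hbD habne hh.1 (rel_trans hD hh.2.symm ha1)
      (rel_trans hD hh.2.symm ha2)
  set L : Finset V :=
    (clsF D e).attach.image (fun h => Sym2.Mem.other' (hcenter h.1 h.2)) with hL
  have hinj : Function.Injective (fun h : {x // x ∈ clsF D e} =>
      Sym2.Mem.other' (hcenter h.1 h.2)) := by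
    intro h h' heq
    have : h.1 = h'.1 := by
      rw [← Sym2.other_spec' (hcenter h.1 h.2), ← Sym2.other_spec' (hcenter h'.1 h'.2)]
      simp only at heq
      rw [heq]
    exact Subtype.ext this
  have hcard : L.card = (clsF D e).card := by
    rw [hL, Finset.card_image_of_injective _ hinj, Finset.card_attach]
  have hmemD : ∀ l ∈ L, s(c, l) ∈ D := by
    intro l hl
    obtain ⟨h, -, rfl⟩ := Finset.mem_image.mp hl
    rw [Sym2.other_spec' (hcenter h.1 h.2)]
    exact (mem_clsF.mp h.2).1
  refine hC2 L.card (by omega) ⟨c, L, rfl, ?_, ?_, ?_⟩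
  · intro hc
    obtain ⟨h, -, heq⟩ := Finset.mem_image.mp hc
    have hnd : ¬ (h.1).IsDiag :=
      G.not_isDiag_of_mem_edgeSet (hD.1 (mem_clsF.mp h.2).1)
    have := Sym2.other_ne hnd (hcenter h.1 h.2)
    rw [Sym2.other_eq_other'] at this
    exact this heq
  · intro l hl
    exact G.mem_edgeSet.mp (hD.1 (hmemD l hl))
  · intro l₁ hl₁ l₂ hl₂ hne hadj
    have : s(c, l₁) ≠ s(c, l₂) := by
      intro hcc
      rcases Sym2.eq_iff.mp hcc with ⟨-, h⟩ | ⟨h1, h2⟩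
      · exact hne h
      · exact hne (h2.trans h1)
    exact leaves hD (hmemD l₁ hl₁) (hmemD l₂ hl₂) this hadj

end Reps

section Key
variable [Fintype V] [DecidableEq V]

lemma key {t : ℕ} (ht : 3 ≤ t)
    (hC2 : ∀ s, t + 1 ≤ s → ¬ ∃ (c : V) (L : Finset V), L.card = s ∧ c ∉ L ∧
      (∀ l ∈ L, G.Adj c l) ∧ (∀ l₁ ∈ L, ∀ l₂ ∈ L, l₁ ≠ l₂ → ¬ G.Adj l₁ l₂))
    (hC3 : ∀ M : Set (Sym2 V), G.IsInducedMatching M → M.ncard = t →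
      ∀ z : V, z ∉ {v | ∃ e ∈ M, v ∈ e} →
        ∃ x y : V, x ≠ y ∧ x ∈ {v | ∃ e ∈ M, v ∈ e} ∧ y ∈ {v | ∃ e ∈ M, v ∈ e} ∧
          G.Adj z x ∧ G.Adj z y)
    (hC4 : ∀ (D : Set (Sym2 V)) (s : ℕ), G.IsEOPSet D → D.ncard = t →
      2 ≤ s → s ≤ t - 1 →
      Nat.card (G.induce {v | ∃ e ∈ D, v ∈ e}).ConnectedComponent = s →
      ∀ u : {v | ∃ e ∈ D, v ∈ e},
        (∀ e ∈ D, ∀ w : {v | ∃ e ∈ D, v ∈ e}, (w : V) ∈ e →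
          (G.induce {v | ∃ e ∈ D, v ∈ e}).Reachable w u → (u : V) ∈ e) →
        ∀ z : V, z ∉ {v | ∃ e ∈ D, v ∈ e} → G.Adj z (u : V) →
          ∃ x ∈ {v : V | ∃ e ∈ D, v ∈ e}, x ≠ (u : V) ∧ G.Adj z x)
    (hD : G.IsEOPSet D) : D.ncard ≤ t := by
  by_contra hbig
  push_neg at hbig
  set DF : Finset (Sym2 V) := (Set.toFinite D).toFinset with hDFdef
  have hDFmem : ∀ e, e ∈ DF ↔ e ∈ D := fun e => Set.Finite.mem_toFinset _
  have hDFcard : t + 1 ≤ DF.card := by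
    rw [← Set.ncard_eq_toFinset_card D (Set.toFinite D)]
    omega
  set m := (reps D).card with hm
  have hrepssub : reps D ⊆ DF := fun e he => (hDFmem e).mpr (reps_mem he)
  have hclassle : ∀ e ∈ reps D, (clsF D e).card ≤ t :=
    fun e he => class_card_le hD (by omega) hC2 (reps_mem he)
  have hcount : DF.card ≤ m * t := by
    have hsub : DF ⊆ (reps D).biUnion (fun e => clsF D e) := by
      intro f hf
      have hfD : f ∈ D := (hDFmem f).mp hf
      exact Finset.mem_biUnion.mpr
        ⟨rep D f, mem_reps_self hfD, mem_clsF.mpr ⟨hfD, (rel_rep hfD).symm⟩⟩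
    calc DF.card ≤ ((reps D).biUnion (fun e => clsF D e)).card := Finset.card_le_card hsub
      _ ≤ ∑ e ∈ reps D, (clsF D e).card := Finset.card_biUnion_le
      _ ≤ m * t := by
          have := Finset.sum_le_card_nsmul (reps D) (fun e => (clsF D e).card) t hclassle
          simpa [smul_eq_mul] using this
  have hm2 : 2 ≤ m := by
    by_contra hm1
    have h1 : m * t ≤ 1 * t := Nat.mul_le_mul_right t (by omega)
    rw [one_mul] at h1
    omega
  by_cases hmt : t ≤ m
  · -- Case A : at least t components, use C3
    obtain ⟨M0, hM0sub, hM0card⟩ := Finset.exists_subset_card_eq hmt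
    have hM0D : ∀ e ∈ M0, e ∈ D := fun e he => reps_mem (hM0sub he)
    have hnrel : ∀ e ∈ M0, ∀ f ∈ M0, e ≠ f → ¬ Rel D e f :=
      fun e he f hf hne => reps_not_rel hD (hM0sub he) (hM0sub hf) hne
    have hnoshare : ∀ e ∈ M0, ∀ f ∈ M0, e ≠ f → ∀ v, ¬(v ∈ e ∧ v ∈ f) :=
      fun e he f hf hne v hv =>
        hnrel e he f hf hne ⟨hM0D e he, hM0D f hf, Or.inr ⟨v, hv⟩⟩
    have hIM : G.IsInducedMatching ↑M0 := by
      refine ⟨fun e he => hD.1 (hM0D e (Finset.mem_coe.mp he)), ?_, ?_⟩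
      · exact fun e₁ h1 e₂ h2 hne v hv =>
          hnoshare e₁ (Finset.mem_coe.mp h1) e₂ (Finset.mem_coe.mp h2) hne v hv
      · intro e₁ h1 e₂ h2 hne a b ha hb hadj
        exact cross hD (hM0D e₁ (Finset.mem_coe.mp h1)) (hM0D e₂ (Finset.mem_coe.mp h2))
          (hnoshare e₁ (Finset.mem_coe.mp h1) e₂ (Finset.mem_coe.mp h2) hne) ha hb hadj
    have hssub : M0 ⊂ DF := by
      refine Finset.ssubset_iff_subset_ne.mpr ⟨hM0sub.trans hrepssub, fun h => ?_⟩
      rw [h] at hM0card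
      omega
    obtain ⟨e', he'DF, he'M0⟩ := Finset.exists_of_ssubset hssub
    have he'D : e' ∈ D := (hDFmem e').mp he'DF
    have he'nd : ¬ e'.IsDiag := G.not_isDiag_of_mem_edgeSet (hD.1 he'D)
    obtain ⟨p, q, hpq⟩ := sym2_exists e'
    have hpqne : p ≠ q := by rw [hpq] at he'nd; simpa using he'nd
    have hz : ∃ z ∈ e', ∀ f ∈ M0, z ∉ f := by
      by_contra h
      push_neg at h
      obtain ⟨f, hf, hpf⟩ := h p (by rw [hpq]; exact Sym2.mem_mk_left p q)
      obtain ⟨g, hg, hqg⟩ := h q (by rw [hpq]; exact Sym2.mem_mk_right p q)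
      by_cases hfg : f = g
      · subst hfg
        have : f = e' := by
          rw [hpq]; exact sym2_eq_of_mem hpf hqg hpqne
        exact he'M0 (this ▸ hf)
      · have hr1 : Rel D f e' := ⟨hM0D f hf, he'D, Or.inr ⟨p, hpf, by rw [hpq]; exact Sym2.mem_mk_left p q⟩⟩
        have hr2 : Rel D e' g := ⟨he'D, hM0D g hg, Or.inr ⟨q, by rw [hpq]; exact Sym2.mem_mk_right p q, hqg⟩⟩
        exact hnrel f hf g hg hfg (rel_trans hD hr1 hr2)
    obtain ⟨z, hze', hzM⟩ := hz
    have hzout : z ∉ {v | ∃ e ∈ (↑M0 : Set (Sym2 V)), v ∈ e} := by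
      rintro ⟨f, hf, hzf⟩
      exact hzM f (Finset.mem_coe.mp hf) hzf
    obtain ⟨x, y, hxy, hxM, hyM, hzx, hzy⟩ :=
      hC3 ↑M0 hIM (by rw [Set.ncard_coe_finset, hM0card]) z hzout
    obtain ⟨fx, hfx, hxfx⟩ := hxM
    obtain ⟨fy, hfy, hyfy⟩ := hyM
    have hfx' : fx ∈ M0 := Finset.mem_coe.mp hfx
    have hfy' : fy ∈ M0 := Finset.mem_coe.mp hfy
    have hrelx : Rel D e' fx := by
      by_contra hn
      exact cross hD he'D (hM0D fx hfx')
        (fun v hv => hn ⟨he'D, hM0D fx hfx', Or.inr ⟨v, hv⟩⟩) hze' hxfx hzx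
    have hrely : Rel D e' fy := by
      by_contra hn
      exact cross hD he'D (hM0D fy hfy')
        (fun v hv => hn ⟨he'D, hM0D fy hfy', Or.inr ⟨v, hv⟩⟩) hze' hyfy hzy
    have hfxfy : fx = fy := by
      by_contra hne
      exact hnrel fx hfx' fy hfy' hne (rel_trans hD hrelx.symm hrely)
    subst hfxfy
    have hfxeq : fx = s(x, y) := sym2_eq_of_mem hxfx hyfy hxy
    have hne'fx : e' ≠ fx := fun h => hzM fx hfx' (h ▸ hze')
    rcases hrelx.2.2 with h | ⟨v, hve', hvfx⟩
    · exact hne'fx h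
    have hzv : z ≠ v := fun h => hzM fx hfx' (h ▸ hvfx)
    have he'eq : e' = s(z, v) := sym2_eq_of_mem hze' hve' hzv
    have hvmem : v = x ∨ v = y := by
      rw [hfxeq] at hvfx
      exact Sym2.mem_iff.mp hvfx
    rcases hvmem with rfl | rfl
    · -- v = x : edges s(x,z) and s(x,y) in D, distinct, but Adj z y
      have h1 : s(v, z) ∈ D := by rw [← Sym2.eq_swap, ← he'eq]; exact he'D
      have h2 : s(v, y) ∈ D := by rw [← hfxeq]; exact hM0D fx hfx'
      have hne12 : s(v, z) ≠ s(v, y) := by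
        intro h
        rcases Sym2.eq_iff.mp h with ⟨-, h2'⟩ | ⟨h1', -⟩
        · exact hzy.ne h2'
        · exact hxy h1'
      exact leaves hD h1 h2 hne12 hzy
    · have h1 : s(v, z) ∈ D := by rw [← Sym2.eq_swap, ← he'eq]; exact he'D
      have h2 : s(v, x) ∈ D := by rw [← Sym2.eq_swap, ← hfxeq]; exact hM0D fx hfx'
      have hne12 : s(v, z) ≠ s(v, x) := by
        intro h
        rcases Sym2.eq_iff.mp h with ⟨-, h2'⟩ | ⟨h1', -⟩
        · exact hzx.ne h2'
        · exact hxy h1'.symm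
      exact leaves hD h1 h2 hne12 hzx
  · -- Case B : 2 ≤ m ≤ t - 1, use C4
    have hmt1 : m ≤ t - 1 := by omega
    -- pigeonhole: two distinct edges in the same class
    obtain ⟨e1, he1DF, e2, he2DF, hne12, hrepeq⟩ :=
      Finset.exists_ne_map_eq_of_card_lt_of_maps_to (t := reps D)
        (show (reps D).card < DF.card by omega)
        (fun f hf => mem_reps_self ((hDFmem f).mp hf))
    have he1D : e1 ∈ D := (hDFmem e1).mp he1DF
    have he2D : e2 ∈ D := (hDFmem e2).mp he2DF
    have hrel12 : Rel D e1 e2 :=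
      rel_trans hD (rel_rep he1D) (hrepeq ▸ (rel_rep he2D).symm)
    rcases hrel12.2.2 with h | ⟨c, hc1, hc2⟩
    · exact hne12 h
    set b := Sym2.Mem.other' hc1 with hbdef
    have hspec1 : s(c, b) = e1 := Sym2.other_spec' hc1
    set a := Sym2.Mem.other' hc2 with hadef
    have hspec2 : s(c, a) = e2 := Sym2.other_spec' hc2
    have hscbD : s(c, b) ∈ D := by rw [hspec1]; exact he1D
    have hscaD : s(c, a) ∈ D := by rw [hspec2]; exact he2D
    have hsne : s(c, b) ≠ s(c, a) := by rw [hspec1, hspec2]; exact hne12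
    have hbc : b ≠ c := by
      have hnd : ¬ e1.IsDiag := G.not_isDiag_of_mem_edgeSet (hD.1 he1D)
      have := Sym2.other_ne hnd hc1
      rwa [Sym2.other_eq_other'] at this
    have hb1 : b ∈ e1 := by rw [← hspec1]; exact Sym2.mem_mk_right c b
    have hc1' : c ∈ e1 := hc1
    -- construct D'
    set R2 : Finset (Sym2 V) := insert e2 ((reps D).erase (rep D e1)) with hR2
    have hR2sub : R2 ⊆ DF :=
      Finset.insert_subset he2DF ((Finset.erase_subset _ _).trans hrepssub)
    have he1R2 : e1 ∉ R2 := by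
      intro h
      rcases Finset.mem_insert.mp h with h | h
      · exact hne12 h
      · exact (Finset.mem_erase.mp h).1 (rep_fix hD (Finset.mem_erase.mp h).2).symm
    have hR2card : R2.card ≤ m := by
      have h1 := Finset.card_insert_le e2 ((reps D).erase (rep D e1))
      have h2 : ((reps D).erase (rep D e1)).card = m - 1 :=
        Finset.card_erase_of_mem (mem_reps_self he1D)
      rw [← hR2] at h1
      omega
    have hmeets : ∀ e ∈ reps D, ∃ g ∈ R2, Rel D e g := by
      intro e he
      by_cases heq : e = rep D e1
      · refine ⟨e2, Finset.mem_insert_self _ _, ?_⟩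
        rw [heq]
        exact rel_trans hD (rel_rep he1D).symm hrel12
      · exact ⟨e, Finset.mem_insert_of_mem (Finset.mem_erase.mpr ⟨heq, he⟩),
          rel_refl (reps_mem he)⟩
    have hsdcard : t - R2.card ≤ (DF \ insert e1 R2).card := by
      have h1 : DF.card ≤ (DF \ insert e1 R2).card + (insert e1 R2).card :=
        Finset.card_le_card_sdiff_add_card
      have h2 := Finset.card_insert_le e1 R2
      omega
    obtain ⟨X, hXsub, hXcard⟩ := Finset.exists_subset_card_eq hsdcard
    set D' : Finset (Sym2 V) := R2 ∪ X with hD'def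
    have hdisj : Disjoint R2 X := by
      rw [Finset.disjoint_left]
      intro x hx hxX
      exact (Finset.mem_sdiff.mp (hXsub hxX)).2 (Finset.mem_insert_of_mem hx)
    have hD'card : D'.card = t := by
      rw [hD'def, Finset.card_union_of_disjoint hdisj, hXcard]
      omega
    have hD'DF : D' ⊆ DF :=
      Finset.union_subset hR2sub ((hXsub).trans (Finset.sdiff_subset))
    have hD'D : ∀ e ∈ D', e ∈ D := fun e he => (hDFmem e).mp (hD'DF he)
    have he1D' : e1 ∉ D' := by
      intro h
      rcases Finset.mem_union.mp h with h | h
      · exact he1R2 h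
      · exact (Finset.mem_sdiff.mp (hXsub h)).2 (Finset.mem_insert_self _ _)
    have he2D' : e2 ∈ D' := Finset.mem_union_left _ (Finset.mem_insert_self _ _)
    set S : Set V := {v | ∃ e ∈ (↑D' : Set (Sym2 V)), v ∈ e} with hSdef
    have hSmem : ∀ v : V, v ∈ S ↔ ∃ e ∈ D', v ∈ e := by
      intro v
      simp only [hSdef, Set.mem_setOf_eq, Finset.mem_coe]
    have hEOP' : G.IsEOPSet ↑D' :=
      ⟨fun e he => hD.1 (hD'D e (Finset.mem_coe.mp he)),
        fun a' ha' b' hb' hne => hD.2 a' (hD'D a' (Finset.mem_coe.mp ha'))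
          b' (hD'D b' (Finset.mem_coe.mp hb')) hne⟩
    -- class function on vertices of S
    have hedge : ∀ v : ↥S, ∃ e, e ∈ D' ∧ (v : V) ∈ e := by
      intro v
      obtain ⟨e, he, hv⟩ := (hSmem v).mp v.2
      exact ⟨e, he, hv⟩
    set eo : ↥S → Sym2 V := fun v => (hedge v).choose with heodef
    have heo1 : ∀ v, eo v ∈ D' := fun v => (hedge v).choose_spec.1
    have heo2 : ∀ v : ↥S, (v : V) ∈ eo v := fun v => (hedge v).choose_spec.2
    set cls : ↥S → Sym2 V := fun v => rep D (eo v) with hclsdef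
    have hclsSpec : ∀ (v : ↥S) (f : Sym2 V), f ∈ D' → (v : V) ∈ f → cls v = rep D f := by
      intro v f hf hvf
      exact rep_eq hD ⟨hD'D _ (heo1 v), hD'D _ hf, Or.inr ⟨v, heo2 v, hvf⟩⟩
    have hadjcls : ∀ v w : ↥S, (G.induce S).Adj v w → cls v = cls w := by
      intro v w hvw
      have hadj : G.Adj (v : V) (w : V) := hvw
      have hrel : Rel D (eo v) (eo w) := by
        by_contra hn
        exact cross hD (hD'D _ (heo1 v)) (hD'D _ (heo1 w))
          (fun u hu => hn ⟨hD'D _ (heo1 v), hD'D _ (heo1 w), Or.inr ⟨u, hu⟩⟩)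
          (heo2 v) (heo2 w) hadj
      exact rep_eq hD hrel
    have hwalkcls : ∀ (v w : ↥S), (G.induce S).Walk v w → cls v = cls w := by
      intro v w p
      induction p with
      | nil => rfl
      | cons h p ih => exact (hadjcls _ _ h).trans ih
    have hreachcls : ∀ v w : ↥S, (G.induce S).Reachable v w → cls v = cls w :=
      fun v w h => h.elim (fun p => hwalkcls v w p)
    have hedgeReach : ∀ (x y : ↥S) (f : Sym2 V), f ∈ D' → (x : V) ∈ f → (y : V) ∈ f →
        (G.induce S).Reachable x y := by
      intro x y f hf hx hy
      by_cases hxy : (x : V) = (y : V)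
      · rw [Subtype.ext hxy]
      · have hfE : f ∈ G.edgeSet := hD.1 (hD'D f hf)
        rw [sym2_eq_of_mem hx hy hxy] at hfE
        have hadj : G.Adj (x : V) (y : V) := G.mem_edgeSet.mp hfE
        exact SimpleGraph.Adj.reachable (show (G.induce S).Adj x y from hadj)
    have hclsReach : ∀ v w : ↥S, cls v = cls w → (G.induce S).Reachable v w := by
      intro v w hvw
      have hrw : rep D (eo v) = rep D (eo w) := hvw
      have hrel : Rel D (eo v) (eo w) :=
        rel_trans hD (rel_rep (hD'D _ (heo1 v)))
          (hrw ▸ (rel_rep (hD'D _ (heo1 w))).symm)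
      rcases hrel.2.2 with heq | ⟨u, huv, huw⟩
      · exact hedgeReach v w (eo w) (heo1 w) (heq ▸ heo2 v) (heo2 w)
      · have huS : u ∈ S := (hSmem u).mpr ⟨eo v, heo1 v, huv⟩
        exact (hedgeReach v ⟨u, huS⟩ (eo v) (heo1 v) (heo2 v) huv).trans
          (hedgeReach ⟨u, huS⟩ w (eo w) (heo1 w) huw (heo2 w))
    -- bijection between reps and connected components
    have hvert : ∀ e : {x // x ∈ reps D}, ∃ v : ↥S, cls v = e.1 := by
      rintro ⟨e, he⟩
      obtain ⟨g, hgR2, hrelg⟩ := hmeets e he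
      have hgD' : g ∈ D' := Finset.mem_union_left _ hgR2
      have hvg : g.out.1 ∈ g := Sym2.out_fst_mem g
      have hvS : g.out.1 ∈ S := (hSmem _).mpr ⟨g, hgD', hvg⟩
      refine ⟨⟨g.out.1, hvS⟩, ?_⟩
      rw [hclsSpec _ g hgD' hvg, ← rep_eq hD hrelg]
      exact rep_fix hD he
    set F : {x // x ∈ reps D} → (G.induce S).ConnectedComponent :=
      fun e => (G.induce S).connectedComponentMk (hvert e).choose with hFdef
    have hFspec : ∀ e, cls ((hvert e).choose) = e.1 := fun e => (hvert e).choose_spec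
    have hFbij : Function.Bijective F := by
      constructor
      · intro a' b' hab
        have hre : (G.induce S).Reachable (hvert a').choose (hvert b').choose :=
          SimpleGraph.ConnectedComponent.exact hab
        have := hreachcls _ _ hre
        exact Subtype.ext ((hFspec a').symm.trans (this.trans (hFspec b')))
      · intro cC
        obtain ⟨v, hv⟩ := cC.exists_rep
        have hvD : eo v ∈ D := hD'D _ (heo1 v)
        have herep : rep D (eo v) ∈ reps D := mem_reps_self hvD
        refine ⟨⟨rep D (eo v), herep⟩, ?_⟩
        have h1 : cls ((hvert ⟨rep D (eo v), herep⟩).choose) = rep D (eo v) :=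
          hFspec ⟨rep D (eo v), herep⟩
        have h2 : cls v = rep D (eo v) := rfl
        have hre := hclsReach _ _ (h1.trans h2.symm)
        rw [← hv]
        exact SimpleGraph.ConnectedComponent.sound hre
    have hNatcard : Nat.card (G.induce S).ConnectedComponent = m := by
      rw [← Nat.card_eq_of_bijective F hFbij, Nat.card_eq_fintype_card, Fintype.card_coe]
    -- the center u and the center condition
    have hcS : c ∈ S := (hSmem c).mpr ⟨e2, he2D', hc2⟩
    have hcenterCond : ∀ e ∈ (↑D' : Set (Sym2 V)), ∀ w : ↥S, (w : V) ∈ e →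
        (G.induce S).Reachable w (⟨c, hcS⟩ : ↥S) → c ∈ e := by
      intro e he w hwe hreach
      have he' : e ∈ D' := Finset.mem_coe.mp he
      have h1 : cls w = rep D e := hclsSpec w e he' hwe
      have h2 : cls (⟨c, hcS⟩ : ↥S) = rep D e2 := hclsSpec _ e2 he2D' hc2
      have hrr : rep D e = rep D e2 := by
        rw [← h1, hreachcls _ _ hreach, h2]
      have hrel : Rel D e e2 :=
        rel_trans hD (rel_rep (hD'D _ he')) (hrr ▸ (rel_rep he2D).symm)
      have hrel1 : Rel D e s(c, b) := by
        rw [hspec1]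
        exact rel_trans hD hrel hrel12.symm
      have hrel2 : Rel D e s(c, a) := by rw [hspec2]; exact hrel
      exact starCenter hD hscbD hscaD hsne (hD'D _ he') hrel1 hrel2
    -- b is outside S and adjacent to c
    have hbS : b ∉ S := by
      intro hb
      obtain ⟨e, he', hbe⟩ := (hSmem b).mp hb
      have hrel : Rel D e e1 := ⟨hD'D _ he', he1D, Or.inr ⟨b, hbe, hb1⟩⟩
      have hrel1 : Rel D e s(c, b) := by rw [hspec1]; exact hrel
      have hrel2 : Rel D e s(c, a) := by
        rw [hspec2]
        exact rel_trans hD hrel hrel12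
      have hce : c ∈ e := starCenter hD hscbD hscaD hsne (hD'D _ he') hrel1 hrel2
      have : e = s(c, b) := sym2_eq_of_mem hce hbe hbc.symm
      rw [this, hspec1] at he'
      exact he1D' he'
    have hAdjcb : G.Adj c b := by
      have := hD.1 he1D
      rw [← hspec1] at this
      exact G.mem_edgeSet.mp this
    obtain ⟨x, hxS, hxc, hbx⟩ :=
      hC4 ↑D' m hEOP' (by rw [Set.ncard_coe_finset, hD'card]) hm2 hmt1 hNatcard
        ⟨c, hcS⟩ hcenterCond b hbS hAdjcb.symm
    -- contradiction
    obtain ⟨f, hfm, hxf⟩ := hxS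
    have hf' : f ∈ D' := Finset.mem_coe.mp hfm
    have hfe1 : f ≠ e1 := fun h => he1D' (h ▸ hf')
    by_cases hrelf : Rel D e1 f
    · have hrel1 : Rel D f s(c, b) := by rw [hspec1]; exact hrelf.symm
      have hrel2 : Rel D f s(c, a) := by
        rw [hspec2]
        exact rel_trans hD hrelf.symm hrel12
      have hcf : c ∈ f := starCenter hD hscbD hscaD hsne (hD'D _ hf') hrel1 hrel2
      have hcx : c ≠ x := fun h => hxc h.symm
      have hfeq : f = s(c, x) := sym2_eq_of_mem hcf hxf hcx
      have hscxD : s(c, x) ∈ D := hfeq ▸ hD'D f hf'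
      have hnecx : s(c, x) ≠ s(c, b) := by
        intro h
        rw [← hfeq, hspec1] at h
        exact hfe1 h
      exact leaves hD hscxD hscbD hnecx hbx.symm
    · exact cross hD he1D (hD'D f hf')
        (fun v hv => hrelf ⟨he1D, hD'D f hf', Or.inr ⟨v, hv⟩⟩) hb1 hxf hbx

end Key

lemma findP3 (n : ℕ) : ∀ (u v : V) (p : G.Walk u v), p.length ≤ n → ¬G.Adj u v → u ≠ v →
    ∃ a b c : V, G.Adj a b ∧ G.Adj b c ∧ ¬G.Adj a c ∧ a ≠ c := by
  induction n with
  | zero =>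
    intro u v p hl hna hne
    have h0 : p.length = 0 := by omega
    exact absurd (SimpleGraph.Walk.eq_of_length_eq_zero h0) hne
  | succ n ih =>
    intro u v p hl hna hne
    cases p with
    | nil => exact absurd rfl hne
    | @cons _ x _ h q =>
      cases q with
      | nil => exact absurd h hna
      | @cons _ y _ h' r =>
        by_cases hy : u = y
        · subst hy
          exact ih u v r (by simp [SimpleGraph.Walk.length_cons] at hl; omega) hna hne
        · by_cases hAdj : G.Adj u y
          · exact ih u v (SimpleGraph.Walk.cons hAdj r)
              (by simp [SimpleGraph.Walk.length_cons] at hl ⊢; omega) hna hne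
          · exact ⟨u, x, y, h, h', hAdj, hy⟩

lemma pair_EOP {a b c : V} (hab : G.Adj a b) (hbc : G.Adj b c) (hac : ¬ G.Adj a c)
    (hane : a ≠ c) :
    G.IsEOPSet {s(a, b), s(b, c)} ∧ ({s(a, b), s(b, c)} : Set (Sym2 V)).ncard = 2 := by
  have hne : s(a, b) ≠ s(b, c) := by
    intro h
    rcases Sym2.eq_iff.mp h with ⟨h1, -⟩ | ⟨h1, -⟩
    · exact hab.ne h1
    · exact hane h1
  refine ⟨⟨?_, ?_⟩, Set.ncard_pair hne⟩
  · intro e he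
    rcases he with rfl | rfl
    · exact G.mem_edgeSet.mpr hab
    · exact G.mem_edgeSet.mpr hbc
  · intro e₁ h1 e₂ h2 hne' e hce
    obtain ⟨heE, hne1, hne2, p, q, hepq, hp, hq⟩ := hce
    rcases h1 with rfl | rfl <;> rcases h2 with rfl | rfl
    · exact hne' rfl
    · rcases Sym2.mem_iff.mp hp with rfl | rfl <;> rcases Sym2.mem_iff.mp hq with rfl | rfl
      · exact hne1 hepq
      · exact hac (G.mem_edgeSet.mp (hepq ▸ heE))
      · exact (G.mem_edgeSet.mp (hepq ▸ heE)).ne rfl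
      · exact hne2 hepq
    · rcases Sym2.mem_iff.mp hp with rfl | rfl <;> rcases Sym2.mem_iff.mp hq with rfl | rfl
      · exact hne2 (hepq.trans Sym2.eq_swap)
      · exact (G.mem_edgeSet.mp (hepq ▸ heE)).ne rfl
      · exact hac ((G.mem_edgeSet.mp (hepq ▸ heE)).symm)
      · exact hne1 (hepq.trans Sym2.eq_swap)
    · exact hne' rfl

end EOPproof

theorem stmt10 {V : Type*} [Fintype V] (G : SimpleGraph V) (hG : G.Connected)
    (t : ℕ) (ht : 3 ≤ t)
    (C1 : 2 ≤ G.diam ∧ G.diam ≤ 2 * t)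
    (C2 : ∀ s, t + 1 ≤ s → ¬ ∃ (c : V) (L : Finset V), L.card = s ∧ c ∉ L ∧
      (∀ l ∈ L, G.Adj c l) ∧ (∀ l₁ ∈ L, ∀ l₂ ∈ L, l₁ ≠ l₂ → ¬ G.Adj l₁ l₂))
    (C3 : ∀ M : Set (Sym2 V), G.IsInducedMatching M → M.ncard = t →
      ∀ z : V, z ∉ {v | ∃ e ∈ M, v ∈ e} →
        ∃ x y : V, x ≠ y ∧ x ∈ {v | ∃ e ∈ M, v ∈ e} ∧ y ∈ {v | ∃ e ∈ M, v ∈ e} ∧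
          G.Adj z x ∧ G.Adj z y)
    (C4 : ∀ (D : Set (Sym2 V)) (s : ℕ), G.IsEOPSet D → D.ncard = t →
      2 ≤ s → s ≤ t - 1 →
      Nat.card (G.induce {v | ∃ e ∈ D, v ∈ e}).ConnectedComponent = s →
      ∀ u : {v | ∃ e ∈ D, v ∈ e},
        (∀ e ∈ D, ∀ w : {v | ∃ e ∈ D, v ∈ e}, (w : V) ∈ e →
          (G.induce {v | ∃ e ∈ D, v ∈ e}).Reachable w u → (u : V) ∈ e) →
        ∀ z : V, z ∉ {v | ∃ e ∈ D, v ∈ e} → G.Adj z (u : V) →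
          ∃ x ∈ {v : V | ∃ e ∈ D, v ∈ e}, x ≠ (u : V) ∧ G.Adj z x) :
    2 ≤ G.eopNum ∧ G.eopNum ≤ t := by
  classical
  have hkey : ∀ D : Set (Sym2 V), G.IsEOPSet D → D.ncard ≤ t :=
    fun D hD => EOPproof.key ht C2 C3 C4 hD
  constructor
  · -- lower bound
    have hne : Nonempty V := hG.nonempty
    obtain ⟨u, v, huv⟩ := G.exists_dist_eq_diam
    have hdist : 2 ≤ G.dist u v := by omega
    have huvne : u ≠ v := by
      intro h
      rw [h, SimpleGraph.dist_self] at hdist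
      omega
    have hnadj : ¬ G.Adj u v := by
      intro h
      have := G.dist_le (SimpleGraph.Walk.cons h SimpleGraph.Walk.nil)
      simp at this
      omega
    obtain ⟨p⟩ := hG.preconnected u v
    obtain ⟨a, b, c, hab, hbc, hac, hane⟩ :=
      EOPproof.findP3 p.length u v p le_rfl hnadj huvne
    obtain ⟨hEOP, hncard⟩ := EOPproof.pair_EOP hab hbc hac hane
    have hmem : 2 ∈ {n | ∃ D : Set (Sym2 V), G.IsEOPSet D ∧ D.ncard = n} :=
      ⟨{s(a, b), s(b, c)}, hEOP, hncard⟩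
    have hbdd : BddAbove {n | ∃ D : Set (Sym2 V), G.IsEOPSet D ∧ D.ncard = n} := by
      refine ⟨t, ?_⟩
      rintro n ⟨D, hD, rfl⟩
      exact hkey D hD
    exact le_csSup hbdd hmem
  · refine csSup_le ⟨0, ∅, ⟨Set.empty_subset _, ?_⟩, Set.ncard_empty _⟩ ?_
    · intro e₁ h1
      exact absurd h1 (Set.notMem_empty e₁)
    · rintro n ⟨D, hD, rfl⟩
      exact hkey D hD
end

section
/- Every graph G obtained from the star K_{1,s} with s ≥ 4 by attaching three pendant edges to exactly one of its pendant vertices (the family R_1) satisfies ρ_e^o(G) = m − 3, where m = s + 3 is the number of edges of G. -/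
def cV (s : ℕ) : Fin (s+4) := ⟨0, by omega⟩
def vV (s : ℕ) : Fin (s+4) := ⟨1, by omega⟩

def starSet (s : ℕ) : Set (Sym2 (Fin (s+4))) :=
  (fun i => s(cV s, i)) '' {i | 1 ≤ i.val ∧ i.val ≤ s}

def pendSet (s : ℕ) : Set (Sym2 (Fin (s+4))) :=
  (fun j => s(vV s, j)) '' {j | s+1 ≤ j.val}

lemma mem_star (s : ℕ) (x y : Fin (s+4)) : s(x,y) ∈ starSet s ↔
    (x.val = 0 ∧ 1 ≤ y.val ∧ y.val ≤ s) ∨ (y.val = 0 ∧ 1 ≤ x.val ∧ x.val ≤ s) := by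
  simp only [starSet, Set.mem_image, Set.mem_setOf_eq, Sym2.eq_iff, cV, Fin.ext_iff]
  constructor
  · rintro ⟨i, hi, h⟩; omega
  · rintro (⟨h0, h1, h2⟩ | ⟨h0, h1, h2⟩)
    · exact ⟨y, by omega⟩
    · exact ⟨x, by omega⟩

lemma mem_pend (s : ℕ) (x y : Fin (s+4)) : s(x,y) ∈ pendSet s ↔
    (x.val = 1 ∧ s+1 ≤ y.val) ∨ (y.val = 1 ∧ s+1 ≤ x.val) := by
  simp only [pendSet, Set.mem_image, Set.mem_setOf_eq, Sym2.eq_iff, vV, Fin.ext_iff]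
  constructor
  · rintro ⟨i, hi, h⟩; omega
  · rintro (⟨h0, h1⟩ | ⟨h0, h1⟩)
    · exact ⟨y, by omega⟩
    · exact ⟨x, by omega⟩

lemma edgeSet_eq (s : ℕ) (hs : 4 ≤ s) (G : SimpleGraph (Fin (s + 4)))
    (hG : G = SimpleGraph.fromRel (fun x y =>
      (x.val = 0 ∧ 1 ≤ y.val ∧ y.val ≤ s) ∨ (x.val = 1 ∧ s + 1 ≤ y.val))) :
    G.edgeSet = starSet s ∪ pendSet s := by
  ext e
  induction e using Sym2.ind with
  | _ x y =>
    rw [SimpleGraph.mem_edgeSet, hG, SimpleGraph.fromRel_adj]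
    simp only [Set.mem_union, mem_star, mem_pend, ne_eq, Fin.ext_iff]
    have := x.isLt; have := y.isLt
    omega

lemma star_ncard (s : ℕ) : (starSet s).ncard = s := by
  rw [starSet, Set.ncard_image_of_injOn]
  · have h : {i : Fin (s+4) | 1 ≤ i.val ∧ i.val ≤ s}
        = ↑(Finset.Icc (⟨1, by omega⟩ : Fin (s+4)) ⟨s, by omega⟩) := by
      ext i
      simp [Finset.mem_Icc, Fin.le_def]
    rw [h, Set.ncard_coe_finset, Fin.card_Icc]
    simp
  · intro i hi j hj h
    simp only [Set.mem_setOf_eq] at hi hj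
    rw [Sym2.eq_iff] at h
    rcases h with ⟨-, h⟩ | ⟨h1, h2⟩
    · exact h
    · exact h2.trans h1

lemma pend_ncard (s : ℕ) : (pendSet s).ncard = 3 := by
  rw [pendSet, Set.ncard_image_of_injOn]
  · have h : {j : Fin (s+4) | s+1 ≤ j.val}
        = ↑(Finset.Icc (⟨s+1, by omega⟩ : Fin (s+4)) ⟨s+3, by omega⟩) := by
      ext j
      have := j.isLt
      simp [Finset.mem_Icc, Fin.le_def]
      omega
    rw [h, Set.ncard_coe_finset, Fin.card_Icc]
    simp
  · intro i hi j hj h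
    simp only [Set.mem_setOf_eq] at hi hj
    rw [Sym2.eq_iff] at h
    rcases h with ⟨-, h⟩ | ⟨h1, h2⟩
    · exact h
    · exact h2.trans h1

lemma star_eop (s : ℕ) (hs : 4 ≤ s) (G : SimpleGraph (Fin (s + 4)))
    (hG : G = SimpleGraph.fromRel (fun x y =>
      (x.val = 0 ∧ 1 ≤ y.val ∧ y.val ≤ s) ∨ (x.val = 1 ∧ s + 1 ≤ y.val))) :
    G.IsEOPSet (starSet s) := by
  constructor
  · rw [edgeSet_eq s hs G hG]; exact Set.subset_union_left
  · rintro e₁ h₁ e₂ h₂ hne e ⟨heE, hne1, hne2, a, b, rfl, ha, hb⟩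
    obtain ⟨i, hi, rfl⟩ := h₁
    obtain ⟨i', hi', rfl⟩ := h₂
    simp only [Set.mem_setOf_eq] at hi hi'
    rw [edgeSet_eq s hs G hG, Set.mem_union, mem_star, mem_pend] at heE
    rw [Sym2.mem_iff] at ha hb
    simp only [ne_eq, Sym2.eq_iff, Fin.ext_iff, cV] at hne1 hne2 ha hb hne
    omega

lemma eop_le (s : ℕ) (hs : 4 ≤ s) (G : SimpleGraph (Fin (s + 4)))
    (hG : G = SimpleGraph.fromRel (fun x y =>
      (x.val = 0 ∧ 1 ≤ y.val ∧ y.val ≤ s) ∨ (x.val = 1 ∧ s + 1 ≤ y.val)))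
    (D : Set (Sym2 (Fin (s+4)))) (hD : G.IsEOPSet D) : D.ncard ≤ s := by
  have hE := edgeSet_eq s hs G hG
  have hsub : D ⊆ starSet s ∪ pendSet s := hE ▸ hD.1
  by_cases hP : ∃ p ∈ D, p ∈ pendSet s
  · obtain ⟨p, hpD, hpP⟩ := hP
    obtain ⟨j, hj, rfl⟩ := hpP
    simp only [Set.mem_setOf_eq] at hj
    have claim : D ⊆ insert (s(cV s, vV s)) (pendSet s) := by
      intro e heD
      rcases hsub heD with hstar | hpend
      · obtain ⟨i, hi, rfl⟩ := hstar
        simp only [Set.mem_setOf_eq] at hi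
        by_cases hiv : i = vV s
        · subst hiv; exact Set.mem_insert _ _
        · exfalso
          have hvv : (vV s).val = 1 := rfl
          have hcc : (cV s).val = 0 := rfl
          have hiv' : i.val ≠ 1 := by
            intro h; exact hiv (Fin.ext (by simp [vV, h]))
          have hne : s(vV s, j) ≠ s(cV s, i) := by
            simp only [ne_eq, Sym2.eq_iff, Fin.ext_iff, cV, vV]
            omega
          refine hD.2 _ hpD _ heD hne (s(vV s, cV s)) ⟨?_, ?_, ?_, vV s, cV s, rfl, ?_, ?_⟩
          · rw [hE, Set.mem_union, mem_star]
            left; right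
            simp only [cV, vV]
            exact ⟨trivial, by omega, by omega⟩
          · simp only [ne_eq, Sym2.eq_iff, Fin.ext_iff, cV, vV]
            omega
          · simp only [ne_eq, Sym2.eq_iff, Fin.ext_iff, cV, vV]
            omega
          · rw [Sym2.mem_iff]; left; rfl
          · rw [Sym2.mem_iff]; left; rfl
      · exact Set.mem_insert_of_mem _ hpend
    calc D.ncard ≤ (insert (s(cV s, vV s)) (pendSet s)).ncard :=
          Set.ncard_le_ncard claim (Set.toFinite _)
      _ ≤ (pendSet s).ncard + 1 := Set.ncard_insert_le _ _
      _ = 4 := by rw [pend_ncard]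
      _ ≤ s := hs
  · push_neg at hP
    have hst : D ⊆ starSet s := fun e he => (hsub he).resolve_right (hP e he)
    calc D.ncard ≤ (starSet s).ncard := Set.ncard_le_ncard hst (Set.toFinite _)
      _ = s := star_ncard s

theorem stmt11 (s : ℕ) (hs : 4 ≤ s) (G : SimpleGraph (Fin (s + 4)))
    (hG : G = SimpleGraph.fromRel (fun x y =>
      (x.val = 0 ∧ 1 ≤ y.val ∧ y.val ≤ s) ∨ (x.val = 1 ∧ s + 1 ≤ y.val))) :
    G.eopNum = G.edgeSet.ncard - 3 := by
  have hE := edgeSet_eq s hs G hG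
  have hdisj : Disjoint (starSet s) (pendSet s) := by
    rw [Set.disjoint_left]
    rintro e ⟨i, hi, rfl⟩ hpd
    simp only [Set.mem_setOf_eq] at hi
    rw [mem_pend] at hpd
    simp only [cV] at hpd
    omega
  have hcard : G.edgeSet.ncard = s + 3 := by
    rw [hE, Set.ncard_union_eq hdisj (Set.toFinite _) (Set.toFinite _),
      star_ncard, pend_ncard]
  have hmemN : s ∈ {n | ∃ D : Set (Sym2 (Fin (s+4))), G.IsEOPSet D ∧ D.ncard = n} :=
    ⟨starSet s, star_eop s hs G hG, star_ncard s⟩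
  have hub : ∀ n ∈ {n | ∃ D : Set (Sym2 (Fin (s+4))), G.IsEOPSet D ∧ D.ncard = n}, n ≤ s := by
    rintro n ⟨D, hD, rfl⟩
    exact eop_le s hs G hG D hD
  rw [SimpleGraph.eopNum, hcard]
  have h3 : s + 3 - 3 = s := by omega
  rw [h3]
  exact le_antisymm (csSup_le ⟨s, hmemN⟩ hub) (le_csSup ⟨s, hub⟩ hmemN)
end

section
/- Every graph G obtained from the star K_{1,s} with s ≥ 4 by subdividing exactly three of its edges once each (the family R_6) satisfies ρ_e^o(G) = m − 3, where m = s + 3 is the number of edges of G. -/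
namespace Stmt12Aux

variable (s : ℕ)

/-- embed a natural number `i ≤ s+3` into `Fin (s+4)` -/
def fv (i : ℕ) : Fin (s + 4) := ⟨min i (s + 3), by omega⟩

lemma fv_val {i : ℕ} (h : i ≤ s + 3) : (fv s i).val = i := by
  simp only [fv]; omega

def StarE : Set (Sym2 (Fin (s + 4))) :=
  {e | ∃ x y : Fin (s + 4), e = s(x, y) ∧ x.val = 0 ∧ 1 ≤ y.val ∧ y.val ≤ s}

def PendE : Set (Sym2 (Fin (s + 4))) :=
  {e | ∃ x y : Fin (s + 4), e = s(x, y) ∧ s - 2 ≤ x.val ∧ x.val ≤ s ∧ y.val = x.val + 3}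

variable (hs : 4 ≤ s) (G : SimpleGraph (Fin (s + 4)))
    (hG : G = SimpleGraph.fromRel (fun x y =>
      (x.val = 0 ∧ 1 ≤ y.val ∧ y.val ≤ s) ∨
      (s - 2 ≤ x.val ∧ x.val ≤ s ∧ y.val = x.val + 3)))

include hG in
lemma adj_iff (x y : Fin (s + 4)) :
    G.Adj x y ↔ (x.val = 0 ∧ 1 ≤ y.val ∧ y.val ≤ s) ∨ (y.val = 0 ∧ 1 ≤ x.val ∧ x.val ≤ s)
    ∨ (s - 2 ≤ x.val ∧ x.val ≤ s ∧ y.val = x.val + 3)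
    ∨ (s - 2 ≤ y.val ∧ y.val ≤ s ∧ x.val = y.val + 3) := by
  subst hG
  simp only [SimpleGraph.fromRel_adj, ne_eq, Fin.ext_iff]
  omega

include hG in
lemma edgeSet_eq : G.edgeSet = StarE s ∪ PendE s := by
  ext e
  induction e using Sym2.ind with
  | _ x y =>
    rw [SimpleGraph.mem_edgeSet, adj_iff s G hG]
    constructor
    · rintro (h | h | h | h)
      · exact Or.inl ⟨x, y, rfl, h.1, h.2.1, h.2.2⟩
      · exact Or.inl ⟨y, x, Sym2.eq_swap.symm, h.1, h.2.1, h.2.2⟩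
      · exact Or.inr ⟨x, y, rfl, h.1, h.2.1, h.2.2⟩
      · exact Or.inr ⟨y, x, Sym2.eq_swap.symm, h.1, h.2.1, h.2.2⟩
    · rintro (⟨a, b, hab, h1, h2, h3⟩ | ⟨a, b, hab, h1, h2, h3⟩) <;>
        rw [Sym2.eq_iff] at hab <;>
        rcases hab with ⟨rfl, rfl⟩ | ⟨rfl, rfl⟩ <;> omega

lemma starE_eq : StarE s = (fun i => s(fv s 0, fv s i)) '' ↑(Finset.Icc 1 s) := by
  ext e
  constructor
  · rintro ⟨x, y, rfl, h1, h2, h3⟩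
    refine ⟨y.val, by simp; omega, ?_⟩
    have hx : x = fv s 0 := by ext; rw [fv_val s (by omega)]; exact h1
    have hy : y = fv s y.val := by ext; rw [fv_val s (by omega)]
    show s(fv s 0, fv s ↑y) = s(x, y)
    rw [hx, ← hy]
  · rintro ⟨i, hi, rfl⟩
    simp only [Finset.coe_Icc, Set.mem_Icc] at hi
    exact ⟨fv s 0, fv s i, rfl, fv_val s (by omega), by rw [fv_val s (by omega)]; omega,
      by rw [fv_val s (by omega)]; omega⟩

include hs in
lemma starE_ncard : (StarE s).ncard = s := by
  rw [starE_eq]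
  rw [Set.ncard_image_of_injOn, Set.ncard_coe_finset, Nat.card_Icc]
  · omega
  · intro i hi j hj hij
    simp only [Finset.coe_Icc, Set.mem_Icc] at hi hj
    rw [Sym2.eq_iff] at hij
    have h0 : (fv s 0).val = 0 := fv_val s (by omega)
    have h1 : (fv s i).val = i := fv_val s (by omega)
    have h2 : (fv s j).val = j := fv_val s (by omega)
    rcases hij with ⟨h, h'⟩ | ⟨h, h'⟩
    · rw [Fin.ext_iff, h1, h2] at h'
      exact h'
    · rw [Fin.ext_iff, h0, h2] at h
      omega

include hs in
lemma pendE_eq : PendE s =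
    {s(fv s (s-2), fv s (s+1)), s(fv s (s-1), fv s (s+2)), s(fv s s, fv s (s+3))} := by
  have v1 : (fv s (s-2)).val = s - 2 := fv_val s (by omega)
  have v2 : (fv s (s+1)).val = s + 1 := fv_val s (by omega)
  have v3 : (fv s (s-1)).val = s - 1 := fv_val s (by omega)
  have v4 : (fv s (s+2)).val = s + 2 := fv_val s (by omega)
  have v5 : (fv s s).val = s := fv_val s (by omega)
  have v6 : (fv s (s+3)).val = s + 3 := fv_val s (by omega)
  ext e
  constructor
  · rintro ⟨x, y, rfl, h1, h2, h3⟩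
    have hx3 : x.val = s - 2 ∨ x.val = s - 1 ∨ x.val = s := by omega
    rcases hx3 with h | h | h
    · left
      have hx : x = fv s (s-2) := by ext; omega
      have hy : y = fv s (s+1) := by ext; omega
      rw [hx, hy]
    · right; left
      have hx : x = fv s (s-1) := by ext; omega
      have hy : y = fv s (s+2) := by ext; omega
      rw [hx, hy]
    · right; right
      have hx : x = fv s s := by ext; omega
      have hy : y = fv s (s+3) := by ext; omega
      rw [hx, hy]
      rfl
  · intro h
    rcases h with h | h | h <;> subst h
    · exact ⟨_, _, rfl, by omega, by omega, by omega⟩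
    · exact ⟨_, _, rfl, by omega, by omega, by omega⟩
    · exact ⟨_, _, rfl, by omega, by omega, by omega⟩

include hs in
lemma pendE_ncard : (PendE s).ncard = 3 := by
  rw [pendE_eq s hs]
  have v1 : (fv s (s-2)).val = s - 2 := fv_val s (by omega)
  have v2 : (fv s (s+1)).val = s + 1 := fv_val s (by omega)
  have v3 : (fv s (s-1)).val = s - 1 := fv_val s (by omega)
  have v4 : (fv s (s+2)).val = s + 2 := fv_val s (by omega)
  have v5 : (fv s s).val = s := fv_val s (by omega)
  have v6 : (fv s (s+3)).val = s + 3 := fv_val s (by omega)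
  have h12 : s(fv s (s-2), fv s (s+1)) ∉
      ({s(fv s (s-1), fv s (s+2)), s(fv s s, fv s (s+3))} : Set (Sym2 (Fin (s+4)))) := by
    intro h
    have h' : s(fv s (s-2), fv s (s+1)) = s(fv s (s-1), fv s (s+2)) ∨
        s(fv s (s-2), fv s (s+1)) = s(fv s s, fv s (s+3)) := by simpa using h
    rcases h' with h' | h' <;> rw [Sym2.eq_iff] at h' <;>
      rcases h' with ⟨h, h'⟩ | ⟨h, h'⟩ <;> rw [Fin.ext_iff] at h h' <;> omega
  have h23 : s(fv s (s-1), fv s (s+2)) ≠ s(fv s s, fv s (s+3)) := by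
    intro h
    rw [Sym2.eq_iff] at h
    rcases h with ⟨h, h'⟩ | ⟨h, h'⟩ <;> rw [Fin.ext_iff] at h h' <;> omega
  rw [Set.ncard_insert_of_notMem h12 (Set.toFinite _), Set.ncard_pair h23]

include hs in
lemma star_pend_disj : Disjoint (StarE s) (PendE s) := by
  rw [Set.disjoint_left]
  rintro e ⟨x, y, rfl, h1, h2, h3⟩ ⟨a, b, hab, g1, g2, g3⟩
  rw [Sym2.eq_iff] at hab
  rcases hab with ⟨h, h'⟩ | ⟨h, h'⟩ <;> rw [Fin.ext_iff] at h h' <;> omega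

include hs hG in
lemma star_eop : G.IsEOPSet (StarE s) := by
  constructor
  · rw [edgeSet_eq s G hG]
    exact Set.subset_union_left
  · rintro e₁ he₁ e₂ he₂ hne e ⟨heE, hee1, hee2, a, b, heab, ha, hb⟩
    obtain ⟨x₁, y₁, rfl, p1, p2, p3⟩ := he₁
    obtain ⟨x₂, y₂, rfl, q1, q2, q3⟩ := he₂
    rw [Sym2.mem_iff] at ha hb
    rw [edgeSet_eq s G hG] at heE
    subst heab
    have haval : a.val ≤ s := by rcases ha with rfl | rfl <;> omega
    have hbval : b.val ≤ s := by rcases hb with rfl | rfl <;> omega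
    rcases heE with ⟨u, v, huv, r1, r2, r3⟩ | ⟨u, v, huv, r1, r2, r3⟩
    · -- e is a star edge
      rw [Sym2.eq_iff] at huv
      rcases huv with ⟨rfl, rfl⟩ | ⟨rfl, rfl⟩
      · -- a has val 0, b = y₂
        have ha' : a = x₁ := by
          rcases ha with rfl | rfl
          · rfl
          · exfalso; omega
        have hb' : b = y₂ := by
          rcases hb with rfl | rfl
          · exfalso; omega
          · rfl
        apply hee2
        have hx : x₁ = x₂ := by ext; omega
        rw [ha', hb', hx]
      · -- b has val 0, a = y₁
        have hb' : b = x₂ := by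
          rcases hb with rfl | rfl
          · rfl
          · exfalso; omega
        have ha' : a = y₁ := by
          rcases ha with rfl | rfl
          · exfalso; omega
          · rfl
        apply hee1
        have hx : x₂ = x₁ := by ext; omega
        rw [ha', hb', Sym2.eq_swap, hx]
    · -- e is a pendant edge : impossible
      rw [Sym2.eq_iff] at huv
      rcases huv with ⟨h, h'⟩ | ⟨h, h'⟩ <;> rw [Fin.ext_iff] at h h' <;> omega

include hs hG in
lemma eop_le (D : Set (Sym2 (Fin (s + 4)))) (hD : G.IsEOPSet D) : D.ncard ≤ s := by
  obtain ⟨hsub, hpack⟩ := hD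
  rw [edgeSet_eq s G hG] at hsub
  by_cases hP : ∀ f ∈ D, f ∈ StarE s
  · calc D.ncard ≤ (StarE s).ncard := Set.ncard_le_ncard hP (Set.toFinite _)
    _ = s := starE_ncard s hs
  · push_neg at hP
    obtain ⟨p, hpD, hpS⟩ := hP
    have hpPend : p ∈ PendE s := by
      rcases hsub hpD with h | h
      · exact absurd h hpS
      · exact h
    obtain ⟨x, y, hp, q1, q2, q3⟩ := hpPend
    subst hp
    have hclaim : D ⊆ insert s(fv s 0, x) (PendE s) := by
      intro f hf
      rcases hsub hf with ⟨u, v, hfuv, r1, r2, r3⟩ | hfP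
      · subst hfuv
        left
        have hvx : v = x := by
          by_contra hvx
          have hne : s(x, y) ≠ s(u, v) := by
            intro h
            rw [Sym2.eq_iff] at h
            rcases h with ⟨h, h'⟩ | ⟨h, h'⟩ <;> rw [Fin.ext_iff] at h h' <;> omega
          refine hpack _ hpD _ hf hne s(x, u) ⟨?_, ?_, ?_, x, u, rfl, ?_, ?_⟩
          · rw [edgeSet_eq s G hG]
            left
            exact ⟨u, x, Sym2.eq_swap.symm, r1, by omega, by omega⟩
          · intro h
            rw [Sym2.eq_iff] at h
            rcases h with ⟨h, h'⟩ | ⟨h, h'⟩ <;> rw [Fin.ext_iff] at h h' <;> omega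
          · intro h
            rw [Sym2.eq_iff] at h
            rcases h with ⟨h, h'⟩ | ⟨h, h'⟩
            · rw [Fin.ext_iff] at h h'; omega
            · exact hvx h.symm
          · exact Sym2.mem_mk_left x y
          · exact Sym2.mem_mk_left u v
        have hu0 : u = fv s 0 := by
          ext
          rw [fv_val s (by omega)]
          exact r1
        rw [hvx, hu0]
      · exact Or.inr hfP
    calc D.ncard ≤ (insert s(fv s 0, x) (PendE s)).ncard :=
          Set.ncard_le_ncard hclaim (Set.toFinite _)
      _ ≤ (PendE s).ncard + 1 := Set.ncard_insert_le _ _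
      _ = 4 := by rw [pendE_ncard s hs]
      _ ≤ s := hs

end Stmt12Aux

theorem stmt12 (s : ℕ) (hs : 4 ≤ s) (G : SimpleGraph (Fin (s + 4)))
    (hG : G = SimpleGraph.fromRel (fun x y =>
      (x.val = 0 ∧ 1 ≤ y.val ∧ y.val ≤ s) ∨
      (s - 2 ≤ x.val ∧ x.val ≤ s ∧ y.val = x.val + 3))) :
    G.eopNum = G.edgeSet.ncard - 3 := by
  have hedge : G.edgeSet.ncard = s + 3 := by
    rw [Stmt12Aux.edgeSet_eq s G hG,
      Set.ncard_union_eq (Stmt12Aux.star_pend_disj s hs) (Set.toFinite _) (Set.toFinite _),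
      Stmt12Aux.starE_ncard s hs, Stmt12Aux.pendE_ncard s hs]
  have hmem : s ∈ {n | ∃ D : Set (Sym2 (Fin (s+4))), G.IsEOPSet D ∧ D.ncard = n} :=
    ⟨Stmt12Aux.StarE s, Stmt12Aux.star_eop s hs G hG, Stmt12Aux.starE_ncard s hs⟩
  have hub : ∀ n ∈ {n | ∃ D : Set (Sym2 (Fin (s+4))), G.IsEOPSet D ∧ D.ncard = n}, n ≤ s := by
    rintro n ⟨D, hD, rfl⟩
    exact Stmt12Aux.eop_le s hs G hG D hD
  have : G.eopNum = s := le_antisymm (csSup_le ⟨s, hmem⟩ hub) (le_csSup ⟨s, hub⟩ hmem)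
  rw [this, hedge]
  omega
end

section
/- For every t ≥ 0, the graph G obtained from the 5-cycle C_5 by attaching t pendant edges to exactly one vertex of the cycle (family R_14) satisfies ρ_e^o(G) = m − 3, where m = t + 5 is the number of edges of G. -/
namespace Stmt13Aux

def Gr (t : ℕ) : SimpleGraph (Fin (t + 5)) :=
  SimpleGraph.fromRel (fun x y =>
    (x.val = 0 ∧ y.val = 1) ∨ (x.val = 1 ∧ y.val = 2) ∨ (x.val = 2 ∧ y.val = 3) ∨
    (x.val = 3 ∧ y.val = 4) ∨ (x.val = 4 ∧ y.val = 0) ∨ (x.val = 0 ∧ 5 ≤ y.val))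

variable {t : ℕ}

def v0 : Fin (t + 5) := ⟨0, by omega⟩
def v1 : Fin (t + 5) := ⟨1, by omega⟩
def v2 : Fin (t + 5) := ⟨2, by omega⟩
def v3 : Fin (t + 5) := ⟨3, by omega⟩
def v4 : Fin (t + 5) := ⟨4, by omega⟩

@[simp] lemma val_v0 : (v0 : Fin (t + 5)).val = 0 := rfl
@[simp] lemma val_v1 : (v1 : Fin (t + 5)).val = 1 := rfl
@[simp] lemma val_v2 : (v2 : Fin (t + 5)).val = 2 := rfl
@[simp] lemma val_v3 : (v3 : Fin (t + 5)).val = 3 := rfl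
@[simp] lemma val_v4 : (v4 : Fin (t + 5)).val = 4 := rfl

lemma adj_iff {x y : Fin (t + 5)} : (Gr t).Adj x y ↔ x ≠ y ∧
    (((x.val = 0 ∧ y.val = 1) ∨ (x.val = 1 ∧ y.val = 2) ∨ (x.val = 2 ∧ y.val = 3) ∨
      (x.val = 3 ∧ y.val = 4) ∨ (x.val = 4 ∧ y.val = 0) ∨ (x.val = 0 ∧ 5 ≤ y.val)) ∨
     ((y.val = 0 ∧ x.val = 1) ∨ (y.val = 1 ∧ x.val = 2) ∨ (y.val = 2 ∧ x.val = 3) ∨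
      (y.val = 3 ∧ x.val = 4) ∨ (y.val = 4 ∧ x.val = 0) ∨ (y.val = 0 ∧ 5 ≤ x.val))) :=
  SimpleGraph.fromRel_adj _ x y

lemma mem_edgeSet_iff {x y : Fin (t + 5)} : s(x, y) ∈ (Gr t).edgeSet ↔ x ≠ y ∧
    (((x.val = 0 ∧ y.val = 1) ∨ (x.val = 1 ∧ y.val = 2) ∨ (x.val = 2 ∧ y.val = 3) ∨
      (x.val = 3 ∧ y.val = 4) ∨ (x.val = 4 ∧ y.val = 0) ∨ (x.val = 0 ∧ 5 ≤ y.val)) ∨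
     ((y.val = 0 ∧ x.val = 1) ∨ (y.val = 1 ∧ x.val = 2) ∨ (y.val = 2 ∧ x.val = 3) ∨
      (y.val = 3 ∧ x.val = 4) ∨ (y.val = 4 ∧ x.val = 0) ∨ (y.val = 0 ∧ 5 ≤ x.val))) := by
  rw [SimpleGraph.mem_edgeSet]; exact adj_iff

/-- the five cycle edges -/
def Cyc (t : ℕ) : Set (Sym2 (Fin (t + 5))) :=
  {s(v0, v1), s(v1, v2), s(v2, v3), s(v3, v4), s(v4, v0)}

/-- the pendant edges -/
def Pend (t : ℕ) : Set (Sym2 (Fin (t + 5))) :=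
  (fun k => s(v0, k)) '' {k : Fin (t + 5) | 5 ≤ k.val}

lemma ne_of_val_ne {x y : Fin (t + 5)} (h : x.val ≠ y.val) : x ≠ y :=
  fun h' => h (by rw [h'])

lemma edgeSet_eq : (Gr t).edgeSet = Cyc t ∪ Pend t := by
  ext e
  induction e using Sym2.inductionOn with
  | hf x y =>
    constructor
    · intro he
      rw [mem_edgeSet_iff] at he
      obtain ⟨hne, h⟩ := he
      have hx5 : x.val < t + 5 := x.isLt
      have hy5 : y.val < t + 5 := y.isLt
      rcases h with (⟨h1, h2⟩ | ⟨h1, h2⟩ | ⟨h1, h2⟩ | ⟨h1, h2⟩ | ⟨h1, h2⟩ | ⟨h1, h2⟩) |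
        (⟨h1, h2⟩ | ⟨h1, h2⟩ | ⟨h1, h2⟩ | ⟨h1, h2⟩ | ⟨h1, h2⟩ | ⟨h1, h2⟩)
      · exact Or.inl (Or.inl (by rw [show x = v0 from Fin.ext h1, show y = v1 from Fin.ext h2]))
      · exact Or.inl (Or.inr (Or.inl (by
          rw [show x = v1 from Fin.ext h1, show y = v2 from Fin.ext h2])))
      · exact Or.inl (Or.inr (Or.inr (Or.inl (by
          rw [show x = v2 from Fin.ext h1, show y = v3 from Fin.ext h2]))))
      · exact Or.inl (Or.inr (Or.inr (Or.inr (Or.inl (by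
          rw [show x = v3 from Fin.ext h1, show y = v4 from Fin.ext h2])))))
      · exact Or.inl (Or.inr (Or.inr (Or.inr (Or.inr (by
          rw [show x = v4 from Fin.ext h1, show y = v0 from Fin.ext h2]; rfl)))))
      · exact Or.inr ⟨y, h2, by rw [show x = v0 from Fin.ext h1]⟩
      · exact Or.inl (Or.inl (by
          rw [show x = v1 from Fin.ext h2, show y = v0 from Fin.ext h1, Sym2.eq_swap]))
      · exact Or.inl (Or.inr (Or.inl (by
          rw [show x = v2 from Fin.ext h2, show y = v1 from Fin.ext h1, Sym2.eq_swap])))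
      · exact Or.inl (Or.inr (Or.inr (Or.inl (by
          rw [show x = v3 from Fin.ext h2, show y = v2 from Fin.ext h1, Sym2.eq_swap]))))
      · exact Or.inl (Or.inr (Or.inr (Or.inr (Or.inl (by
          rw [show x = v4 from Fin.ext h2, show y = v3 from Fin.ext h1, Sym2.eq_swap])))))
      · exact Or.inl (Or.inr (Or.inr (Or.inr (Or.inr (by
          rw [show x = v0 from Fin.ext h2, show y = v4 from Fin.ext h1, Sym2.eq_swap]; rfl)))))
      · exact Or.inr ⟨x, h2, by rw [show y = v0 from Fin.ext h1, Sym2.eq_swap]⟩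
    · rintro ((h | h | h | h | h) | ⟨k, hk, h⟩)
      · rw [h, mem_edgeSet_iff]
        exact ⟨ne_of_val_ne (by simp), Or.inl (Or.inl ⟨rfl, rfl⟩)⟩
      · rw [h, mem_edgeSet_iff]
        exact ⟨ne_of_val_ne (by simp), Or.inl (Or.inr (Or.inl ⟨rfl, rfl⟩))⟩
      · rw [h, mem_edgeSet_iff]
        exact ⟨ne_of_val_ne (by simp), Or.inl (Or.inr (Or.inr (Or.inl ⟨rfl, rfl⟩)))⟩
      · rw [h, mem_edgeSet_iff]
        exact ⟨ne_of_val_ne (by simp), Or.inl (Or.inr (Or.inr (Or.inr (Or.inl ⟨rfl, rfl⟩))))⟩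
      · rw [h, mem_edgeSet_iff]
        exact ⟨ne_of_val_ne (by simp),
          Or.inl (Or.inr (Or.inr (Or.inr (Or.inr (Or.inl ⟨rfl, rfl⟩)))))⟩
      · simp only [Set.mem_setOf_eq] at hk
        simp only at h
        rw [← h, mem_edgeSet_iff]
        refine ⟨ne_of_val_ne ?_, Or.inl (Or.inr (Or.inr (Or.inr (Or.inr (Or.inr ⟨rfl, hk⟩)))))⟩
        simp only [val_v0]
        omega

lemma ncard_indexSet : {k : Fin (t + 5) | 5 ≤ k.val}.ncard = t := by
  have h : {k : Fin (t + 5) | 5 ≤ k.val} =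
      Set.range (fun i : Fin t => (⟨i.val + 5, by omega⟩ : Fin (t + 5))) := by
    ext k
    simp only [Set.mem_setOf_eq, Set.mem_range]
    constructor
    · intro hk
      exact ⟨⟨k.val - 5, by omega⟩, Fin.ext (by simp only [Fin.val_mk]; omega)⟩
    · rintro ⟨i, rfl⟩
      simp only [Fin.val_mk]
      omega
  have hinj : Function.Injective (fun i : Fin t => (⟨i.val + 5, by omega⟩ : Fin (t + 5))) := by
    intro a b hab
    simp only [Fin.mk.injEq] at hab
    exact Fin.ext (by omega)
  rw [h, ← Set.image_univ, Set.ncard_image_of_injective _ hinj, Set.ncard_univ,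
    Nat.card_eq_fintype_card, Fintype.card_fin]

lemma ncard_Pend : (Pend t).ncard = t := by
  rw [Pend, Set.ncard_image_of_injOn, ncard_indexSet]
  intro a _ b _ hab
  exact Sym2.congr_right.mp hab

lemma edge_ne {a b c d : ℕ} {ha : a < t + 5} {hb : b < t + 5} {hc : c < t + 5}
    {hd : d < t + 5} (h : ¬(a = c ∧ b = d) ∧ ¬(a = d ∧ b = c)) :
    s((⟨a, ha⟩ : Fin (t + 5)), ⟨b, hb⟩) ≠ s((⟨c, hc⟩ : Fin (t + 5)), ⟨d, hd⟩) := by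
  rw [Ne, Sym2.eq_iff]
  rintro (⟨h1, h2⟩ | ⟨h1, h2⟩) <;> rw [Fin.mk.injEq] at h1 h2
  · exact h.1 ⟨h1, h2⟩
  · exact h.2 ⟨h1, h2⟩

lemma ncard_Cyc : (Cyc t).ncard = 5 := by
  have h4 : s(v3, v4) ∉ ({s(v4, v0)} : Set (Sym2 (Fin (t + 5)))) := by
    simp only [Set.mem_singleton_iff]
    exact edge_ne (by omega)
  have h3 : s(v2, v3) ∉ ({s(v3, v4), s(v4, v0)} : Set (Sym2 (Fin (t + 5)))) := by
    simp only [Set.mem_insert_iff, Set.mem_singleton_iff]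
    push_neg
    exact ⟨edge_ne (by omega), edge_ne (by omega)⟩
  have h2 : s(v1, v2) ∉ ({s(v2, v3), s(v3, v4), s(v4, v0)} : Set (Sym2 (Fin (t + 5)))) := by
    simp only [Set.mem_insert_iff, Set.mem_singleton_iff]
    push_neg
    exact ⟨edge_ne (by omega), edge_ne (by omega), edge_ne (by omega)⟩
  have h1 : s(v0, v1) ∉
      ({s(v1, v2), s(v2, v3), s(v3, v4), s(v4, v0)} : Set (Sym2 (Fin (t + 5)))) := by
    simp only [Set.mem_insert_iff, Set.mem_singleton_iff]
    push_neg
    exact ⟨edge_ne (by omega), edge_ne (by omega), edge_ne (by omega), edge_ne (by omega)⟩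
  rw [Cyc, Set.ncard_insert_of_notMem h1 (Set.toFinite _),
    Set.ncard_insert_of_notMem h2 (Set.toFinite _),
    Set.ncard_insert_of_notMem h3 (Set.toFinite _),
    Set.ncard_insert_of_notMem h4 (Set.toFinite _), Set.ncard_singleton]


lemma disj : Disjoint (Cyc t) (Pend t) := by
  rw [Set.disjoint_right]
  rintro e ⟨k, hk, rfl⟩ hc
  simp only [Set.mem_setOf_eq] at hk
  simp only [Cyc, Set.mem_insert_iff, Set.mem_singleton_iff] at hc
  rcases hc with h | h | h | h | h <;>
    simp only [Sym2.eq_iff, Fin.ext_iff, val_v0, val_v1, val_v2, val_v3, val_v4] at h <;>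
    omega

lemma ncard_edgeSet : (Gr t).edgeSet.ncard = t + 5 := by
  rw [edgeSet_eq, Set.ncard_union_eq disj (Set.toFinite _) (Set.toFinite _),
    ncard_Cyc, ncard_Pend]
  omega

lemma hA_edge : s(v0, v1) ∈ (Gr t).edgeSet := by
  rw [mem_edgeSet_iff]
  exact ⟨ne_of_val_ne (by simp), Or.inl (Or.inl ⟨rfl, rfl⟩)⟩

lemma hB_edge : s(v1, v2) ∈ (Gr t).edgeSet := by
  rw [mem_edgeSet_iff]
  exact ⟨ne_of_val_ne (by simp), Or.inl (Or.inr (Or.inl ⟨rfl, rfl⟩))⟩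

lemma hC_edge : s(v2, v3) ∈ (Gr t).edgeSet := by
  rw [mem_edgeSet_iff]
  exact ⟨ne_of_val_ne (by simp), Or.inl (Or.inr (Or.inr (Or.inl ⟨rfl, rfl⟩)))⟩

lemma hD_edge : s(v3, v4) ∈ (Gr t).edgeSet := by
  rw [mem_edgeSet_iff]
  exact ⟨ne_of_val_ne (by simp), Or.inl (Or.inr (Or.inr (Or.inr (Or.inl ⟨rfl, rfl⟩))))⟩

lemma hE_edge : s(v4, v0) ∈ (Gr t).edgeSet := by
  rw [mem_edgeSet_iff]
  exact ⟨ne_of_val_ne (by simp),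
    Or.inl (Or.inr (Or.inr (Or.inr (Or.inr (Or.inl ⟨rfl, rfl⟩)))))⟩

lemma upper {D : Set (Sym2 (Fin (t + 5)))} (hD : (Gr t).IsEOPSet D) : D.ncard ≤ t + 2 := by
  have conf : ∀ e₁ ∈ D, ∀ e₂ ∈ D, e₁ ≠ e₂ → ∀ e ∈ (Gr t).edgeSet, e ≠ e₁ → e ≠ e₂ →
      ∀ a b, e = s(a, b) → a ∈ e₁ → b ∈ e₂ → False := by
    intro e₁ h1 e₂ h2 hne e he hne1 hne2 a b heq ha hb
    exact hD.2 e₁ h1 e₂ h2 hne e ⟨he, hne1, hne2, a, b, heq, ha, hb⟩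
  have cAC : ¬(s(v0, v1) ∈ D ∧ s(v2, v3) ∈ D) := by
    rintro ⟨h1, h2⟩
    exact conf _ h1 _ h2 (edge_ne (by omega)) s(v1, v2) hB_edge (edge_ne (by omega))
      (edge_ne (by omega)) v1 v2 rfl (Sym2.mem_mk_right _ _) (Sym2.mem_mk_left _ _)
  have cAD : ¬(s(v0, v1) ∈ D ∧ s(v3, v4) ∈ D) := by
    rintro ⟨h1, h2⟩
    exact conf _ h1 _ h2 (edge_ne (by omega)) s(v4, v0) hE_edge (edge_ne (by omega))
      (edge_ne (by omega)) v0 v4 Sym2.eq_swap (Sym2.mem_mk_left _ _) (Sym2.mem_mk_right _ _)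
  have cBD : ¬(s(v1, v2) ∈ D ∧ s(v3, v4) ∈ D) := by
    rintro ⟨h1, h2⟩
    exact conf _ h1 _ h2 (edge_ne (by omega)) s(v2, v3) hC_edge (edge_ne (by omega))
      (edge_ne (by omega)) v2 v3 rfl (Sym2.mem_mk_right _ _) (Sym2.mem_mk_left _ _)
  have cBE : ¬(s(v1, v2) ∈ D ∧ s(v4, v0) ∈ D) := by
    rintro ⟨h1, h2⟩
    exact conf _ h1 _ h2 (edge_ne (by omega)) s(v0, v1) hA_edge (edge_ne (by omega))
      (edge_ne (by omega)) v1 v0 Sym2.eq_swap (Sym2.mem_mk_left _ _) (Sym2.mem_mk_right _ _)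
  have cCE : ¬(s(v2, v3) ∈ D ∧ s(v4, v0) ∈ D) := by
    rintro ⟨h1, h2⟩
    exact conf _ h1 _ h2 (edge_ne (by omega)) s(v3, v4) hD_edge (edge_ne (by omega))
      (edge_ne (by omega)) v3 v4 rfl (Sym2.mem_mk_right _ _) (Sym2.mem_mk_left _ _)
  have key : ∃ x y : Sym2 (Fin (t + 5)), D ∩ Cyc t ⊆ {x, y} := by
    by_cases hA : s(v0, v1) ∈ D
    · by_cases hB : s(v1, v2) ∈ D
      · refine ⟨s(v0, v1), s(v1, v2), ?_⟩
        rintro e ⟨heD, heC⟩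
        simp only [Cyc, Set.mem_insert_iff, Set.mem_singleton_iff] at heC
        rcases heC with rfl | rfl | rfl | rfl | rfl
        · exact Or.inl rfl
        · exact Or.inr rfl
        · exact absurd ⟨hA, heD⟩ cAC
        · exact absurd ⟨hA, heD⟩ cAD
        · exact absurd ⟨hB, heD⟩ cBE
      · refine ⟨s(v0, v1), s(v4, v0), ?_⟩
        rintro e ⟨heD, heC⟩
        simp only [Cyc, Set.mem_insert_iff, Set.mem_singleton_iff] at heC
        rcases heC with rfl | rfl | rfl | rfl | rfl
        · exact Or.inl rfl
        · exact absurd heD hB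
        · exact absurd ⟨hA, heD⟩ cAC
        · exact absurd ⟨hA, heD⟩ cAD
        · exact Or.inr rfl
    · by_cases hB : s(v1, v2) ∈ D
      · refine ⟨s(v1, v2), s(v2, v3), ?_⟩
        rintro e ⟨heD, heC⟩
        simp only [Cyc, Set.mem_insert_iff, Set.mem_singleton_iff] at heC
        rcases heC with rfl | rfl | rfl | rfl | rfl
        · exact absurd heD hA
        · exact Or.inl rfl
        · exact Or.inr rfl
        · exact absurd ⟨hB, heD⟩ cBD
        · exact absurd ⟨hB, heD⟩ cBE
      · by_cases hC : s(v2, v3) ∈ D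
        · refine ⟨s(v2, v3), s(v3, v4), ?_⟩
          rintro e ⟨heD, heC⟩
          simp only [Cyc, Set.mem_insert_iff, Set.mem_singleton_iff] at heC
          rcases heC with rfl | rfl | rfl | rfl | rfl
          · exact absurd heD hA
          · exact absurd heD hB
          · exact Or.inl rfl
          · exact Or.inr rfl
          · exact absurd ⟨hC, heD⟩ cCE
        · refine ⟨s(v3, v4), s(v4, v0), ?_⟩
          rintro e ⟨heD, heC⟩
          simp only [Cyc, Set.mem_insert_iff, Set.mem_singleton_iff] at heC
          rcases heC with rfl | rfl | rfl | rfl | rfl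
          · exact absurd heD hA
          · exact absurd heD hB
          · exact absurd heD hC
          · exact Or.inl rfl
          · exact Or.inr rfl
  obtain ⟨x, y, hxy⟩ := key
  have h2 : (D ∩ Cyc t).ncard ≤ 2 := by
    calc (D ∩ Cyc t).ncard ≤ ({x, y} : Set (Sym2 (Fin (t + 5)))).ncard :=
          Set.ncard_le_ncard hxy (Set.toFinite _)
      _ ≤ 2 := by simpa using Set.ncard_insert_le x {y}
  have hP : (D ∩ Pend t).ncard ≤ t := by
    have h := Set.ncard_le_ncard (Set.inter_subset_right (s := D) (t := Pend t))
      (Set.toFinite _)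
    rwa [ncard_Pend] at h
  have hDeq : D = (D ∩ Cyc t) ∪ (D ∩ Pend t) := by
    rw [← Set.inter_union_distrib_left]
    refine (Set.inter_eq_left.mpr ?_).symm
    rw [← edgeSet_eq]
    exact hD.1
  calc D.ncard = ((D ∩ Cyc t) ∪ (D ∩ Pend t)).ncard := by rw [← hDeq]
    _ ≤ (D ∩ Cyc t).ncard + (D ∩ Pend t).ncard := Set.ncard_union_le _ _
    _ ≤ 2 + t := Nat.add_le_add h2 hP
    _ = t + 2 := by omega

def X (t : ℕ) : Set (Fin (t + 5)) := insert v1 (insert v4 {k | 5 ≤ k.val})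

def D0 (t : ℕ) : Set (Sym2 (Fin (t + 5))) := (fun k => s(v0, k)) '' X t

lemma X_vals {x : Fin (t + 5)} (hx : x ∈ X t) : x.val = 1 ∨ x.val = 4 ∨ 5 ≤ x.val := by
  simp only [X, Set.mem_insert_iff, Set.mem_setOf_eq] at hx
  rcases hx with rfl | rfl | hx
  · exact Or.inl rfl
  · exact Or.inr (Or.inl rfl)
  · exact Or.inr (Or.inr hx)

lemma D0_edges {x : Fin (t + 5)} (hx : x ∈ X t) : s(v0, x) ∈ (Gr t).edgeSet := by
  have h := X_vals hx
  rw [mem_edgeSet_iff]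
  refine ⟨ne_of_val_ne ?_, ?_⟩ <;> simp only [val_v0, true_and, and_true] <;> omega

lemma D0_eop : (Gr t).IsEOPSet (D0 t) := by
  constructor
  · rintro e ⟨x, hx, rfl⟩
    exact D0_edges hx
  · rintro e₁ ⟨x, hx, rfl⟩ e₂ ⟨y, hy, rfl⟩ hne e ⟨he, hne1, hne2, a, b, heq, ha, hb⟩
    simp only [Sym2.mem_iff] at ha hb
    rcases ha with rfl | rfl <;> rcases hb with rfl | rfl
    · rw [heq, mem_edgeSet_iff] at he
      exact he.1 rfl
    · exact hne2 heq
    · exact hne1 (heq.trans Sym2.eq_swap)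
    · rw [heq, mem_edgeSet_iff] at he
      have hx' := X_vals hx
      have hy' := X_vals hy
      rcases he with ⟨-, h⟩
      omega

lemma ncard_D0 : (D0 t).ncard = t + 2 := by
  rw [D0, Set.ncard_image_of_injOn (fun a _ b _ h => Sym2.congr_right.mp h), X,
    Set.ncard_insert_of_notMem ?h1 (Set.toFinite _),
    Set.ncard_insert_of_notMem ?h2 (Set.toFinite _), ncard_indexSet]
  case h1 =>
    simp only [Set.mem_insert_iff, Set.mem_setOf_eq, Fin.ext_iff, val_v1, val_v4]
    omega
  case h2 =>
    simp only [Set.mem_setOf_eq, val_v4]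
    omega

lemma eop_eq : (Gr t).eopNum = t + 2 := by
  have hg : IsGreatest {n | ∃ D : Set (Sym2 (Fin (t + 5))), (Gr t).IsEOPSet D ∧ D.ncard = n}
      (t + 2) := by
    constructor
    · exact ⟨D0 t, D0_eop, ncard_D0⟩
    · rintro n ⟨D, hD, rfl⟩
      exact upper hD
  rw [SimpleGraph.eopNum]
  exact hg.csSup_eq

end Stmt13Aux

theorem stmt13 (t : ℕ) (G : SimpleGraph (Fin (t + 5)))
    (hG : G = SimpleGraph.fromRel (fun x y =>
      (x.val = 0 ∧ y.val = 1) ∨ (x.val = 1 ∧ y.val = 2) ∨ (x.val = 2 ∧ y.val = 3) ∨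
      (x.val = 3 ∧ y.val = 4) ∨ (x.val = 4 ∧ y.val = 0) ∨ (x.val = 0 ∧ 5 ≤ y.val))) :
    G.eopNum = G.edgeSet.ncard - 3 := by
  subst hG
  show (Stmt13Aux.Gr t).eopNum = (Stmt13Aux.Gr t).edgeSet.ncard - 3
  rw [Stmt13Aux.eop_eq, Stmt13Aux.ncard_edgeSet]
  omega
end
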